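/- arXiv:2007.11410 — 8 statements merged into one kernel-verified Lean document; each statement's English description precedes it below -/
import Mathlib

section
/- Let G be a connected, non-complete chordal graph on m ≥ 3 vertices with maximal cliques C_1,…,C_t, and fix any integer n ≥ 1. Then there exists an m×m polynomial matrix P(x) in n variables with sparsity graph G that is positive definite for every x ∈ ℝⁿ, but for which there exist NO polynomial matrices S_1(x),…,S_t(x) of sizes |C_1|×|C_1|,…,|C_t|×|C_t|, each positive semidefinite at every x ∈ ℝⁿ, satisfying P(x) = Σ_{k=1}^t E_{C_k}ᵀ S_k(x) E_{C_k} identically. -/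
open MvPolynomial Matrix

noncomputable section

/-- A graph is chordal if every cycle of length at least 4 has a chord, i.e. an
edge of the graph joining two nonconsecutive vertices of the cycle. -/
def IsChordalG {V : Type*} (G : SimpleGraph V) : Prop :=
  ∀ ⦃v : V⦄ (w : G.Walk v v), w.IsCycle → 4 ≤ w.length →
    ∃ i j : ℕ, i + 2 ≤ j ∧ j < w.length ∧ ¬(i = 0 ∧ j = w.length - 1) ∧
      G.Adj (w.getVert i) (w.getVert j)

/-- `C` is a maximal clique of `G`. -/
def IsMaxClique {V : Type*} (G : SimpleGraph V) (C : Finset V) : Prop :=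
  G.IsClique (C : Set V) ∧ ∀ D : Finset V, G.IsClique (D : Set V) → C ⊆ D → C = D

/-- The `|C| × m` "inflation" matrix `E_C`: its `(i,j)` entry is `1` if `j` is the
`i`-th smallest element of `C` and `0` otherwise. -/
def cliqueE {m : ℕ} (R : Type*) [Zero R] [One R] (C : Finset (Fin m)) :
    Matrix (Fin C.card) (Fin m) R :=
  Matrix.of fun i j => if C.orderEmbOfFin rfl i = j then 1 else 0

/-- Evaluation of a polynomial matrix at a point. -/
def evalMat {n : ℕ} {ι : Type*} (P : Matrix ι ι (MvPolynomial (Fin n) ℝ)) (x : Fin n → ℝ) :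
    Matrix ι ι ℝ := P.map (MvPolynomial.eval x)

/-! ### Auxiliary lemmas -/

lemma eval_aeval_poly {n : ℕ} (g : Fin n → Polynomial ℝ) (β : MvPolynomial (Fin n) ℝ) (t : ℝ) :
    Polynomial.eval t (MvPolynomial.aeval g β) =
      MvPolynomial.eval (fun i => Polynomial.eval t (g i)) β := by
  induction β using MvPolynomial.induction_on with
  | C a => simp
  | add f g hf hg => simp [hf, hg]
  | mul_X f i hf => simp [hf]

/-- A multivariate real polynomial that is everywhere positive, and such that
`(1 + x₀²) · β(x) ≤ 1` everywhere, cannot exist. -/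
lemma no_poly {n : ℕ} (hn : 1 ≤ n) (β : MvPolynomial (Fin n) ℝ)
    (h1 : ∀ x : Fin n → ℝ, 0 < MvPolynomial.eval x β)
    (h2 : ∀ x : Fin n → ℝ, (1 + (x ⟨0, hn⟩)^2) * MvPolynomial.eval x β ≤ 1) : False := by
  set i0 : Fin n := ⟨0, hn⟩
  set p : Polynomial ℝ :=
    MvPolynomial.aeval (fun i : Fin n => if i = i0 then (Polynomial.X : Polynomial ℝ) else 0) β
    with hp
  have hev : ∀ t : ℝ, p.eval t = MvPolynomial.eval (fun i => if i = i0 then t else 0) β := by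
    intro t
    rw [hp, eval_aeval_poly]
    simp [apply_ite (Polynomial.eval t)]
  set q : Polynomial ℝ := (1 + Polynomial.X^2) * p with hq
  have hqe : ∀ t : ℝ, q.eval t = (1 + t^2) * p.eval t := by intro t; simp [hq]
  have hppos : ∀ t : ℝ, 0 < p.eval t := fun t => hev t ▸ h1 _
  have hqle : ∀ t : ℝ, q.eval t ≤ 1 := by
    intro t
    rw [hqe, hev]
    have := h2 (fun i => if i = i0 then t else 0)
    simpa using this
  have hqpos : ∀ t : ℝ, 0 < q.eval t := by
    intro t; rw [hqe]; have := hppos t; nlinarith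
  have hpne : p ≠ 0 := by
    intro h; have := hppos 0; rw [h] at this; simp at this
  have hdeg : 0 < q.degree := by
    rw [hq, Polynomial.degree_mul]
    have h1' : (1 + Polynomial.X^2 : Polynomial ℝ).degree = 2 := by
      compute_degree!
    rw [h1']
    have h0 : 0 ≤ p.degree := Polynomial.zero_le_degree_iff.mpr hpne
    calc (0:WithBot ℕ) < 2 := by norm_num
    _ ≤ 2 + p.degree := le_add_of_nonneg_right h0
  obtain ⟨t, ht⟩ := ((Polynomial.abs_tendsto_atTop q hdeg).eventually_gt_atTop 1).exists
  have h3 := hqle t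
  have h4 := hqpos t
  rw [abs_of_pos h4] at ht
  linarith

lemma walk_triple {V : Type*} (G : SimpleGraph V) :
    ∀ (N : ℕ) {a c : V} (w : G.Walk a c), w.length ≤ N → a ≠ c → ¬ G.Adj a c →
    ∃ x y z : V, G.Adj x y ∧ G.Adj y z ∧ x ≠ z ∧ ¬ G.Adj x z := by
  intro N
  induction N with
  | zero =>
    intro a c w hlen hne _
    cases w with
    | nil => exact absurd rfl hne
    | cons h w' => simp at hlen
  | succ N ih =>
    intro a c w hlen hne hadj
    cases w with
    | nil => exact absurd rfl hne
    | cons h w' =>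
      rename_i d
      cases w' with
      | nil => exact absurd h hadj
      | cons h2 w'' =>
        rename_i e
        by_cases hae : a = e
        · have hlen' : (w''.copy hae.symm rfl).length ≤ N := by
            simp only [SimpleGraph.Walk.length_copy]
            simp [SimpleGraph.Walk.length_cons] at hlen
            omega
          exact ih (w''.copy hae.symm rfl) hlen' hne hadj
        · by_cases hadj2 : G.Adj a e
          · have hlen' : (SimpleGraph.Walk.cons hadj2 w'').length ≤ N := by
              simp [SimpleGraph.Walk.length_cons] at hlen ⊢
              omega
            exact ih (SimpleGraph.Walk.cons hadj2 w'') hlen' hne hadj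
          · exact ⟨a, d, e, h, h2, hae, hadj2⟩

lemma exists_triple {V : Type*} (G : SimpleGraph V) (hconn : G.Connected) (hnc : G ≠ ⊤) :
    ∃ x y z : V, G.Adj x y ∧ G.Adj y z ∧ x ≠ z ∧ ¬ G.Adj x z := by
  have : ∃ a c : V, a ≠ c ∧ ¬ G.Adj a c := by
    by_contra hcon
    push_neg at hcon
    apply hnc
    ext v w
    constructor
    · exact fun h => h.ne
    · intro h
      exact hcon v w h
  obtain ⟨a, c, hne, hadj⟩ := this
  obtain ⟨w⟩ := hconn.preconnected a c
  exact walk_triple G w.length w le_rfl hne hadj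

/-- The factor matrix: identity plus `s·E_{ab} - s·E_{ca} + E_{cb}`. -/
def Bmat {m : ℕ} {R : Type*} [CommRing R] (s : R) (a b c : Fin m) :
    Matrix (Fin m) (Fin m) R :=
  Matrix.of fun i k => (if i = k then 1 else 0) + (if i = a ∧ k = b then s else 0)
    + (if i = c ∧ k = a then -s else 0) + (if i = c ∧ k = b then 1 else 0)

lemma Bmat_apply {m : ℕ} {R : Type*} [CommRing R] (s : R) (a b c : Fin m) (i k : Fin m) :
    Bmat s a b c i k = (if i = k then 1 else 0) + (if i = a ∧ k = b then s else 0)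
    + (if i = c ∧ k = a then -s else 0) + (if i = c ∧ k = b then 1 else 0) := rfl

lemma Bmat_map {m : ℕ} {R R' : Type*} [CommRing R] [CommRing R'] (f : R →+* R') (s : R)
    (a b c : Fin m) : (Bmat s a b c).map f = Bmat (f s) a b c := by
  ext i k
  simp [Bmat_apply, Matrix.map_apply, apply_ite f]

/-- Sum against a row of `B`. -/
lemma Bmat_row_sum {m : ℕ} {R : Type*} [CommRing R] (s : R) (a b c : Fin m)
    (hab : a ≠ b) (hbc : b ≠ c) (hac : a ≠ c) (i : Fin m) (X : Fin m → R) :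
    ∑ k, Bmat s a b c i k * X k =
      X i + (if i = a then s * X b else 0) + (if i = c then - (s * X a) + X b else 0) := by
  by_cases hia : i = a
  · subst hia
    simp only [Bmat_apply, if_pos rfl, hac, if_neg hac, false_and, if_false]
    simp [add_mul, ite_mul, Finset.sum_add_distrib, Finset.sum_ite_eq, Finset.sum_ite_eq', hac]
  · by_cases hic : i = c
    · subst hic
      simp only [Bmat_apply]
      simp [add_mul, ite_mul, Finset.sum_add_distrib, Finset.sum_ite_eq, Finset.sum_ite_eq', hia]
      ring
    · simp only [Bmat_apply]
      simp [add_mul, ite_mul, Finset.sum_add_distrib, Finset.sum_ite_eq, Finset.sum_ite_eq',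
        hia, hic]

/-- The polynomial-matrix counterexample: `P = B Bᵀ`. -/
def Pmat {m : ℕ} {R : Type*} [CommRing R] (s : R) (a b c : Fin m) :
    Matrix (Fin m) (Fin m) R :=
  Bmat s a b c * (Bmat s a b c)ᵀ

lemma Pmat_apply {m : ℕ} {R : Type*} [CommRing R] (s : R) (a b c : Fin m)
    (hab : a ≠ b) (hbc : b ≠ c) (hac : a ≠ c) (i j : Fin m) :
    Pmat s a b c i j = Bmat s a b c j i + (if i = a then s * Bmat s a b c j b else 0)
      + (if i = c then - (s * Bmat s a b c j a) + Bmat s a b c j b else 0) := by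
  rw [Pmat, Matrix.mul_apply]
  have := Bmat_row_sum s a b c hab hbc hac i (fun k => Bmat s a b c j k)
  simpa [Matrix.transpose_apply] using this

section Entries
variable {m : ℕ} {R : Type*} [CommRing R] (s : R) (a b c : Fin m)
  (hab : a ≠ b) (hbc : b ≠ c) (hac : a ≠ c)
include hab hbc hac

lemma Pmat_aa : Pmat s a b c a a = 1 + s * s := by
  simp [Pmat_apply s a b c hab hbc hac, Bmat_apply, hab, hac, hab.symm, hac.symm, hbc, hbc.symm]

lemma Pmat_bb : Pmat s a b c b b = 1 := by
  simp [Pmat_apply s a b c hab hbc hac, Bmat_apply, hab, hac, hab.symm, hac.symm, hbc, hbc.symm]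

lemma Pmat_cc : Pmat s a b c c c = 1 + (1 + s * s) := by
  simp [Pmat_apply s a b c hab hbc hac, Bmat_apply, hab, hac, hab.symm, hac.symm, hbc, hbc.symm]
  ring

lemma Pmat_ab : Pmat s a b c a b = s := by
  simp [Pmat_apply s a b c hab hbc hac, Bmat_apply, hab, hac, hab.symm, hac.symm, hbc, hbc.symm]

lemma Pmat_bc : Pmat s a b c b c = 1 := by
  simp [Pmat_apply s a b c hab hbc hac, Bmat_apply, hab, hac, hab.symm, hac.symm, hbc, hbc.symm]

lemma Pmat_sparse (i j : Fin m) (hij : i ≠ j)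
    (h1 : ¬(i = a ∧ j = b)) (h2 : ¬(i = b ∧ j = a))
    (h3 : ¬(i = b ∧ j = c)) (h4 : ¬(i = c ∧ j = b)) :
    Pmat s a b c i j = 0 := by
  rw [Pmat_apply s a b c hab hbc hac]
  have hba := hab.symm
  have hcb := hbc.symm
  have hca := hac.symm
  by_cases hia : i = a
  · have hjb : j ≠ b := fun h => h1 ⟨hia, h⟩
    have hja : j ≠ a := fun h => hij (hia.trans h.symm)
    rw [hia]
    by_cases hjc : j = c
    · rw [hjc]
      simp [Bmat_apply, hab, hac, hbc, hba, hcb, hca]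
    · simp [Bmat_apply, hab, hac, hbc, hba, hcb, hca, hja, hjb, hjc]
  · by_cases hic : i = c
    · have hjb : j ≠ b := fun h => h4 ⟨hic, h⟩
      have hjc : j ≠ c := fun h => hij (hic.trans h.symm)
      rw [hic]
      by_cases hja : j = a
      · rw [hja]
        simp [Bmat_apply, hab, hac, hbc, hba, hcb, hca]
      · simp [Bmat_apply, hab, hac, hbc, hba, hcb, hca, hja, hjb, hjc]
    · have c1 : j ≠ i := hij.symm
      have c2 : ¬(j = a ∧ i = b) := fun h => h2 ⟨h.2, h.1⟩
      have c3 : ¬(j = c ∧ i = a) := fun h => hia h.2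
      have c4 : ¬(j = c ∧ i = b) := fun h => h3 ⟨h.2, h.1⟩
      simp [Bmat_apply, hia, hic, c1, c2, c3, c4]

end Entries

lemma Pmat_isSymm {m : ℕ} {R : Type*} [CommRing R] (s : R) (a b c : Fin m) :
    (Pmat s a b c).IsSymm := by
  rw [Matrix.IsSymm, Pmat, Matrix.transpose_mul, Matrix.transpose_transpose]

/-- Explicit inverse of `Bmat`. -/
def Binv {m : ℕ} {R : Type*} [CommRing R] (s : R) (a b c : Fin m) :
    Matrix (Fin m) (Fin m) R :=
  Matrix.of fun i k => (if i = k then 1 else 0) + (if i = a ∧ k = b then -s else 0)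
    + (if i = c ∧ k = a then s else 0) + (if i = c ∧ k = b then -(1 + s * s) else 0)

lemma Bmat_mul_Binv {m : ℕ} {R : Type*} [CommRing R] (s : R) (a b c : Fin m)
    (hab : a ≠ b) (hbc : b ≠ c) (hac : a ≠ c) :
    Bmat s a b c * Binv s a b c = 1 := by
  have hba := hab.symm
  have hcb := hbc.symm
  have hca := hac.symm
  ext i j
  rw [Matrix.mul_apply]
  rw [Bmat_row_sum s a b c hab hbc hac i (fun k => Binv s a b c k j)]
  by_cases hia : i = a
  · rw [hia]
    by_cases hjb : j = b
    · rw [hjb]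
      simp [Binv, Matrix.one_apply, hab, hac, hbc, hba, hcb, hca]
    · simp [Binv, Matrix.one_apply, hab, hac, hbc, hba, hcb, hca, hjb, Ne.symm hjb]
  · by_cases hic : i = c
    · rw [hic]
      by_cases hja : j = a
      · rw [hja]
        simp [Binv, Matrix.one_apply, hab, hac, hbc, hba, hcb, hca]
      · by_cases hjb : j = b
        · rw [hjb]
          simp [Binv, Matrix.one_apply, hab, hac, hbc, hba, hcb, hca]
          ring
        · simp [Binv, Matrix.one_apply, hab, hac, hbc, hba, hcb, hca, hja, hjb,
            Ne.symm hja, Ne.symm hjb]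
    · simp [Binv, Matrix.one_apply, hia, hic]

/-- `C Cᵀ` is positive definite when `C` has a right inverse. -/
lemma posDef_mul_transpose_self {k : ℕ} (C D : Matrix (Fin k) (Fin k) ℝ)
    (hCD : C * D = 1) : (C * Cᵀ).PosDef := by
  rw [Matrix.posDef_iff_dotProduct_mulVec]
  constructor
  · rw [Matrix.IsHermitian, Matrix.conjTranspose_eq_transpose_of_trivial,
      Matrix.transpose_mul, Matrix.transpose_transpose]
  · intro y hy
    have hstar : star y = y := by
      funext i; simp
    rw [hstar, ← Matrix.mulVec_mulVec]
    rw [Matrix.dotProduct_mulVec, ← Matrix.mulVec_transpose]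
    set z := Cᵀ *ᵥ y with hz
    have hzne : z ≠ 0 := by
      intro h0
      apply hy
      have : Dᵀ * Cᵀ = 1 := by
        rw [← Matrix.transpose_mul, hCD, Matrix.transpose_one]
      calc y = (Dᵀ * Cᵀ) *ᵥ y := by rw [this, Matrix.one_mulVec]
      _ = Dᵀ *ᵥ z := by rw [← Matrix.mulVec_mulVec, hz]
      _ = 0 := by rw [h0, Matrix.mulVec_zero]
    have hnn : 0 ≤ z ⬝ᵥ z := Finset.sum_nonneg fun i _ => mul_self_nonneg _
    have hne : z ⬝ᵥ z ≠ 0 := fun h => hzne (dotProduct_self_eq_zero.mp h)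
    exact lt_of_le_of_ne hnn (Ne.symm hne)

/-- Index of `i` in the clique `C`. -/
def cIdx {m : ℕ} (C : Finset (Fin m)) (i : Fin m) (h : i ∈ C) : Fin C.card :=
  (C.orderIsoOfFin rfl).symm ⟨i, h⟩

lemma orderEmbOfFin_cIdx {m : ℕ} (C : Finset (Fin m)) (i : Fin m) (h : i ∈ C) :
    C.orderEmbOfFin rfl (cIdx C i h) = i := by
  rw [cIdx, ← Finset.coe_orderIsoOfFin_apply, OrderIso.apply_symm_apply]

lemma conj_apply {m : ℕ} {R : Type*} [CommRing R] (C : Finset (Fin m))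
    (M : Matrix (Fin C.card) (Fin C.card) R) (i j : Fin m) :
    ((cliqueE R C)ᵀ * M * cliqueE R C) i j =
      if h : i ∈ C ∧ j ∈ C then M (cIdx C i h.1) (cIdx C j h.2) else 0 := by
  have hinj := (C.orderEmbOfFin (k := C.card) rfl).injective
  rw [Matrix.mul_apply]
  by_cases hj : j ∈ C
  · rw [Finset.sum_eq_single (cIdx C j hj)]
    · rw [Matrix.mul_apply]
      by_cases hi : i ∈ C
      · rw [Finset.sum_eq_single (cIdx C i hi)]
        · simp [cliqueE, orderEmbOfFin_cIdx, hi, hj]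
        · intro p _ hp
          have : C.orderEmbOfFin rfl p ≠ i := by
            intro h
            exact hp (hinj (by rw [h, orderEmbOfFin_cIdx]))
          simp [cliqueE, this]
        · intro h; exact absurd (Finset.mem_univ _) h
      · have hz : (∑ p, (cliqueE R C)ᵀ i p * M p (cIdx C j hj)) = 0 := by
          apply Finset.sum_eq_zero
          intro p _
          have : C.orderEmbOfFin rfl p ≠ i := fun h => hi (h ▸ C.orderEmbOfFin_mem rfl p)
          simp [cliqueE, this]
        rw [hz, zero_mul, dif_neg (fun h => hi h.1)]
    · intro q _ hq
      have : C.orderEmbOfFin rfl q ≠ j := by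
        intro h
        exact hq (hinj (by rw [h, orderEmbOfFin_cIdx]))
      simp [cliqueE, this]
    · intro h; exact absurd (Finset.mem_univ _) h
  · have hterm : ∀ q : Fin C.card, ((cliqueE R C)ᵀ * M) i q * cliqueE R C q j = 0 := by
      intro q
      have : C.orderEmbOfFin rfl q ≠ j := fun h => hj (h ▸ C.orderEmbOfFin_mem rfl q)
      simp [cliqueE, this]
    rw [Finset.sum_eq_zero fun q _ => hterm q]
    rw [dif_neg (fun h => hj h.2)]

lemma psd_diag_nonneg {k : ℕ} {M : Matrix (Fin k) (Fin k) ℝ} (h : M.PosSemidef) (p : Fin k) :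
    0 ≤ M p p := by
  have := (Matrix.posSemidef_iff_dotProduct_mulVec.mp h).2 (Pi.single p 1)
  simpa [Matrix.mulVec, dotProduct, Pi.single_apply, Finset.sum_ite_eq, Finset.sum_ite_eq']
    using this

lemma psd_offdiag_sq {k : ℕ} {M : Matrix (Fin k) (Fin k) ℝ} (h : M.PosSemidef) (p q : Fin k) :
    M p q ^ 2 ≤ M p p * M q q := by
  by_cases hpq : p = q
  · subst hpq
    have := psd_diag_nonneg h p
    nlinarith
  · have hsym : M q p = M p q := by
      have := h.1
      rw [Matrix.IsHermitian] at this
      conv_lhs => rw [← this]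
      simp
    have key : ∀ t : ℝ, 0 ≤ M p p * (t * t) + (2 * M p q) * t + M q q := by
      intro t
      have h2 := (Matrix.posSemidef_iff_dotProduct_mulVec.mp h).2 (fun r => (if r = p then t else 0) + (if r = q then 1 else 0))
      have hstar : star (fun r => (if r = p then t else 0) + (if r = q then (1:ℝ) else 0))
          = (fun r => (if r = p then t else 0) + (if r = q then 1 else 0)) := by
        funext r; simp
      rw [hstar] at h2
      have hexp : dotProduct (fun r => (if r = p then t else 0) + (if r = q then (1:ℝ) else 0))
          (M *ᵥ (fun r => (if r = p then t else 0) + (if r = q then 1 else 0)))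
          = M p p * (t * t) + (2 * M p q) * t + M q q := by
        simp only [Matrix.mulVec, dotProduct, mul_add, add_mul, ite_mul, mul_ite,
          mul_zero, zero_mul, mul_one, one_mul, Finset.sum_add_distrib,
          Finset.sum_ite_eq, Finset.sum_ite_eq', Finset.mem_univ, if_pos]
        rw [hsym]
        ring
      rw [hexp] at h2
      exact h2
    have hd := discrim_le_zero key
    rw [discrim] at hd
    nlinarith

lemma sum_CS {ι : Type*} (F : Finset ι) (A B O : ι → ℝ)
    (hA : ∀ k ∈ F, 0 ≤ A k) (hB : ∀ k ∈ F, 0 ≤ B k)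
    (hO : ∀ k ∈ F, (O k)^2 ≤ A k * B k) :
    (∑ k ∈ F, O k)^2 ≤ (∑ k ∈ F, A k) * (∑ k ∈ F, B k) := by
  have habs : ∀ k ∈ F, |O k| ≤ Real.sqrt (A k) * Real.sqrt (B k) := by
    intro k hk
    rw [← Real.sqrt_mul (hA k hk), ← Real.sqrt_sq_eq_abs]
    exact Real.sqrt_le_sqrt (hO k hk)
  calc (∑ k ∈ F, O k)^2 = |∑ k ∈ F, O k|^2 := (sq_abs _).symm
  _ ≤ (∑ k ∈ F, |O k|)^2 := by
      apply pow_le_pow_left₀ (abs_nonneg _) (Finset.abs_sum_le_sum_abs _ _)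
  _ ≤ (∑ k ∈ F, Real.sqrt (A k) * Real.sqrt (B k))^2 := by
      apply pow_le_pow_left₀ (Finset.sum_nonneg fun k _ => abs_nonneg _)
      exact Finset.sum_le_sum habs
  _ ≤ (∑ k ∈ F, Real.sqrt (A k)^2) * (∑ k ∈ F, Real.sqrt (B k)^2) :=
      Finset.sum_mul_sq_le_sq_mul_sq F _ _
  _ = (∑ k ∈ F, A k) * (∑ k ∈ F, B k) := by
      rw [Finset.sum_congr rfl fun k hk => Real.sq_sqrt (hA k hk),
        Finset.sum_congr rfl fun k hk => Real.sq_sqrt (hB k hk)]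
/-- For any connected, non-complete chordal graph `G` on `m ≥ 3` vertices
with maximal cliques `C 1, …, C t`, and any `n ≥ 1`, there is an `m × m` polynomial matrix
`P` in `n` variables with sparsity graph `G`, positive definite at every `x ∈ ℝⁿ`, which
admits no decomposition `P = Σ_k E_{C k}ᵀ (S k) E_{C k}` with every `S k` positive
semidefinite at every point. -/
theorem stmt0 (m n t : ℕ) (hm : 3 ≤ m) (hn : 1 ≤ n)
    (G : SimpleGraph (Fin m)) (hconn : G.Connected) (hnc : G ≠ ⊤) (hchord : IsChordalG G)
    (Cl : Fin t → Finset (Fin m))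
    (hCl : ∀ D : Finset (Fin m), IsMaxClique G D ↔ ∃ k, Cl k = D) :
    ∃ P : Matrix (Fin m) (Fin m) (MvPolynomial (Fin n) ℝ),
      P.IsSymm ∧
      (∀ i j, i ≠ j → ¬ G.Adj i j → P i j = 0) ∧
      (∀ x : Fin n → ℝ, (evalMat P x).PosDef) ∧
      ¬ ∃ S : (k : Fin t) → Matrix (Fin (Cl k).card) (Fin (Cl k).card) (MvPolynomial (Fin n) ℝ),
          (∀ k (x : Fin n → ℝ), (evalMat (S k) x).PosSemidef) ∧
          P = ∑ k, (cliqueE (MvPolynomial (Fin n) ℝ) (Cl k))ᵀ * S k * cliqueE (MvPolynomial (Fin n) ℝ) (Cl k) := by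
  classical
  obtain ⟨a, b, c, hadj_ab, hadj_bc, hac, hnadj_ac⟩ := exists_triple G hconn hnc
  have hab : a ≠ b := hadj_ab.ne
  have hbc : b ≠ c := hadj_bc.ne
  set i0 : Fin n := ⟨0, hn⟩ with hi0
  set s : MvPolynomial (Fin n) ℝ := MvPolynomial.X i0 with hs
  refine ⟨Pmat s a b c, Pmat_isSymm s a b c, ?_, ?_, ?_⟩
  · -- sparsity
    intro i j hij hnadj
    apply Pmat_sparse s a b c hab hbc hac i j hij
    · rintro ⟨rfl, rfl⟩; exact hnadj hadj_ab
    · rintro ⟨rfl, rfl⟩; exact hnadj hadj_ab.symm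
    · rintro ⟨rfl, rfl⟩; exact hnadj hadj_bc
    · rintro ⟨rfl, rfl⟩; exact hnadj hadj_bc.symm
  · -- positive definiteness
    intro x
    have hmap : evalMat (Pmat s a b c) x
        = Bmat (MvPolynomial.eval x s) a b c * (Bmat (MvPolynomial.eval x s) a b c)ᵀ := by
      rw [evalMat, Pmat, Matrix.map_mul]
      congr 1
      · exact Bmat_map (MvPolynomial.eval x) s a b c
      · rw [Matrix.transpose_map, Bmat_map (MvPolynomial.eval x) s a b c]
    rw [hmap]
    exact posDef_mul_transpose_self _ (Binv (MvPolynomial.eval x s) a b c)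
      (Bmat_mul_Binv _ a b c hab hbc hac)
  · -- no decomposition
    rintro ⟨S, hSpsd, hP⟩
    have hclq : ∀ k, G.IsClique ((Cl k : Finset (Fin m)) : Set (Fin m)) :=
      fun k => ((hCl (Cl k)).mpr ⟨k, rfl⟩).1
    have hnotboth : ∀ k, ¬ (a ∈ Cl k ∧ c ∈ Cl k) := by
      rintro k ⟨ha', hc'⟩
      exact hnadj_ac (hclq k (Finset.mem_coe.mpr ha') (Finset.mem_coe.mpr hc') hac)
    have hent : ∀ i j : Fin m, Pmat s a b c i j
        = ∑ k, (if h : i ∈ Cl k ∧ j ∈ Cl k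
            then (S k) (cIdx (Cl k) i h.1) (cIdx (Cl k) j h.2) else 0) := by
      intro i j
      conv_lhs => rw [hP]
      rw [Matrix.sum_apply]
      exact Finset.sum_congr rfl fun k _ => conj_apply (Cl k) (S k) i j
    set β : MvPolynomial (Fin n) ℝ :=
      ∑ k, (if h : b ∈ Cl k ∧ c ∈ Cl k
          then (S k) (cIdx (Cl k) b h.1) (cIdx (Cl k) b h.1) else 0) with hβ
    have key : ∀ x : Fin n → ℝ, 0 < MvPolynomial.eval x β ∧
        (1 + (x i0)^2) * MvPolynomial.eval x β ≤ 1 := by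
      intro x
      set r : ℝ := x i0 with hr
      have hev : ∀ (i j : Fin m), MvPolynomial.eval x (Pmat s a b c i j)
          = ∑ k, (if h : i ∈ Cl k ∧ j ∈ Cl k
              then (evalMat (S k) x) (cIdx (Cl k) i h.1) (cIdx (Cl k) j h.2) else 0) := by
        intro i j
        rw [hent i j, _root_.map_sum]
        refine Finset.sum_congr rfl fun k _ => ?_
        by_cases h : i ∈ Cl k ∧ j ∈ Cl k
        · rw [dif_pos h, dif_pos h]; rfl
        · rw [dif_neg h, dif_neg h, _root_.map_zero]
      set Oab : Fin t → ℝ := fun k => if h : a ∈ Cl k ∧ b ∈ Cl k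
        then (evalMat (S k) x) (cIdx (Cl k) a h.1) (cIdx (Cl k) b h.2) else 0 with hOab
      set Aab : Fin t → ℝ := fun k => if h : a ∈ Cl k ∧ b ∈ Cl k
        then (evalMat (S k) x) (cIdx (Cl k) a h.1) (cIdx (Cl k) a h.1) else 0 with hAab
      set Bab : Fin t → ℝ := fun k => if h : a ∈ Cl k ∧ b ∈ Cl k
        then (evalMat (S k) x) (cIdx (Cl k) b h.2) (cIdx (Cl k) b h.2) else 0 with hBab
      set Obc : Fin t → ℝ := fun k => if h : b ∈ Cl k ∧ c ∈ Cl k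
        then (evalMat (S k) x) (cIdx (Cl k) b h.1) (cIdx (Cl k) c h.2) else 0 with hObc
      set Bbc : Fin t → ℝ := fun k => if h : b ∈ Cl k ∧ c ∈ Cl k
        then (evalMat (S k) x) (cIdx (Cl k) b h.1) (cIdx (Cl k) b h.1) else 0 with hBbc
      set Cbc : Fin t → ℝ := fun k => if h : b ∈ Cl k ∧ c ∈ Cl k
        then (evalMat (S k) x) (cIdx (Cl k) c h.2) (cIdx (Cl k) c h.2) else 0 with hCbc
      set Daa : Fin t → ℝ := fun k => if h : a ∈ Cl k
        then (evalMat (S k) x) (cIdx (Cl k) a h) (cIdx (Cl k) a h) else 0 with hDaa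
      set Dbb : Fin t → ℝ := fun k => if h : b ∈ Cl k
        then (evalMat (S k) x) (cIdx (Cl k) b h) (cIdx (Cl k) b h) else 0 with hDbb
      set Dcc : Fin t → ℝ := fun k => if h : c ∈ Cl k
        then (evalMat (S k) x) (cIdx (Cl k) c h) (cIdx (Cl k) c h) else 0 with hDcc
      have e1 : (∑ k, Oab k) = r := by
        have h' := hev a b
        rw [Pmat_ab s a b c hab hbc hac] at h'
        simp only [hs, MvPolynomial.eval_X] at h'
        rw [hr, hOab]
        exact h'.symm
      have e2 : (∑ k, Obc k) = 1 := by
        have h' := hev b c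
        rw [Pmat_bc s a b c hab hbc hac] at h'
        simp only [_root_.map_one] at h'
        rw [hObc]
        exact h'.symm
      have e3 : (∑ k, Daa k) = 1 + r * r := by
        have h' := hev a a
        rw [Pmat_aa s a b c hab hbc hac] at h'
        simp only [_root_.map_add, _root_.map_mul, _root_.map_one, hs, MvPolynomial.eval_X] at h'
        rw [hr, hDaa]
        refine Eq.trans (Finset.sum_congr rfl fun k _ => ?_) h'.symm
        by_cases h : a ∈ Cl k <;> simp [h]
      have e4 : (∑ k, Dbb k) = 1 := by
        have h' := hev b b
        rw [Pmat_bb s a b c hab hbc hac] at h'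
        simp only [_root_.map_one] at h'
        rw [hDbb]
        refine Eq.trans (Finset.sum_congr rfl fun k _ => ?_) h'.symm
        by_cases h : b ∈ Cl k <;> simp [h]
      have e5 : (∑ k, Dcc k) = 1 + (1 + r * r) := by
        have h' := hev c c
        rw [Pmat_cc s a b c hab hbc hac] at h'
        simp only [_root_.map_add, _root_.map_mul, _root_.map_one, hs, MvPolynomial.eval_X] at h'
        rw [hr, hDcc]
        refine Eq.trans (Finset.sum_congr rfl fun k _ => ?_) h'.symm
        by_cases h : c ∈ Cl k <;> simp [h]
      have nAab : ∀ k, 0 ≤ Aab k := by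
        intro k; simp only [hAab]; split
        · exact psd_diag_nonneg (hSpsd k x) _
        · exact le_rfl
      have nBab : ∀ k, 0 ≤ Bab k := by
        intro k; simp only [hBab]; split
        · exact psd_diag_nonneg (hSpsd k x) _
        · exact le_rfl
      have nBbc : ∀ k, 0 ≤ Bbc k := by
        intro k; simp only [hBbc]; split
        · exact psd_diag_nonneg (hSpsd k x) _
        · exact le_rfl
      have nCbc : ∀ k, 0 ≤ Cbc k := by
        intro k; simp only [hCbc]; split
        · exact psd_diag_nonneg (hSpsd k x) _
        · exact le_rfl
      have cs1 : (∑ k, Oab k)^2 ≤ (∑ k, Aab k) * (∑ k, Bab k) := by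
        apply sum_CS _ _ _ _ (fun k _ => nAab k) (fun k _ => nBab k)
        intro k _
        simp only [hOab, hAab, hBab]
        by_cases h : a ∈ Cl k ∧ b ∈ Cl k
        · rw [dif_pos h, dif_pos h, dif_pos h]
          exact psd_offdiag_sq (hSpsd k x) _ _
        · rw [dif_neg h, dif_neg h, dif_neg h]; norm_num
      have cs2 : (∑ k, Obc k)^2 ≤ (∑ k, Bbc k) * (∑ k, Cbc k) := by
        apply sum_CS _ _ _ _ (fun k _ => nBbc k) (fun k _ => nCbc k)
        intro k _
        simp only [hObc, hBbc, hCbc]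
        by_cases h : b ∈ Cl k ∧ c ∈ Cl k
        · rw [dif_pos h, dif_pos h, dif_pos h]
          exact psd_offdiag_sq (hSpsd k x) _ _
        · rw [dif_neg h, dif_neg h, dif_neg h]; norm_num
      have le1 : (∑ k, Aab k) ≤ ∑ k, Daa k := by
        apply Finset.sum_le_sum
        intro k _
        simp only [hAab, hDaa]
        by_cases h : a ∈ Cl k ∧ b ∈ Cl k
        · rw [dif_pos h, dif_pos h.1]
        · rw [dif_neg h]
          split
          · exact psd_diag_nonneg (hSpsd k x) _
          · exact le_rfl
      have le2 : (∑ k, Cbc k) ≤ ∑ k, Dcc k := by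
        apply Finset.sum_le_sum
        intro k _
        simp only [hCbc, hDcc]
        by_cases h : b ∈ Cl k ∧ c ∈ Cl k
        · rw [dif_pos h, dif_pos h.2]
        · rw [dif_neg h]
          split
          · exact psd_diag_nonneg (hSpsd k x) _
          · exact le_rfl
      have le3 : (∑ k, Bab k) + (∑ k, Bbc k) ≤ ∑ k, Dbb k := by
        rw [← Finset.sum_add_distrib]
        apply Finset.sum_le_sum
        intro k _
        simp only [hBab, hBbc, hDbb]
        by_cases h1 : a ∈ Cl k ∧ b ∈ Cl k
        · by_cases h2 : b ∈ Cl k ∧ c ∈ Cl k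
          · exact absurd ⟨h1.1, h2.2⟩ (hnotboth k)
          · rw [dif_pos h1, dif_neg h2, dif_pos h1.2, add_zero]
        · rw [dif_neg h1, zero_add]
          by_cases h2 : b ∈ Cl k ∧ c ∈ Cl k
          · rw [dif_pos h2, dif_pos h2.1]
          · rw [dif_neg h2]
            split
            · exact psd_diag_nonneg (hSpsd k x) _
            · exact le_rfl
      have eβ : MvPolynomial.eval x β = ∑ k, Bbc k := by
        rw [hβ, _root_.map_sum]
        simp only [hBbc]
        refine Finset.sum_congr rfl fun k _ => ?_
        by_cases h : b ∈ Cl k ∧ c ∈ Cl k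
        · rw [dif_pos h, dif_pos h]; rfl
        · rw [dif_neg h, dif_neg h, _root_.map_zero]
      have sBab_nn : 0 ≤ ∑ k, Bab k := Finset.sum_nonneg fun k _ => nBab k
      have sBbc_nn : 0 ≤ ∑ k, Bbc k := Finset.sum_nonneg fun k _ => nBbc k
      have sCbc_nn : 0 ≤ ∑ k, Cbc k := Finset.sum_nonneg fun k _ => nCbc k
      have hcs2' : 1 ≤ (∑ k, Bbc k) * (∑ k, Cbc k) := by
        rw [e2] at cs2; simpa using cs2
      have hcs1' : r^2 ≤ (∑ k, Aab k) * (∑ k, Bab k) := by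
        rw [e1] at cs1; exact cs1
      have hC : (∑ k, Cbc k) ≤ 1 + (1 + r * r) := e5 ▸ le2
      have hA : (∑ k, Aab k) ≤ 1 + r * r := e3 ▸ le1
      have h13 : (∑ k, Bab k) + (∑ k, Bbc k) ≤ 1 := e4 ▸ le3
      constructor
      · rw [eβ]
        nlinarith [mul_le_mul_of_nonneg_left hC sBbc_nn, sq_nonneg r, sCbc_nn]
      · rw [eβ]
        have hfac : (1 + r^2) * (∑ k, Bbc k) ≤ (1 + r^2) * (1 - ∑ k, Bab k) :=
          mul_le_mul_of_nonneg_left (by linarith) (by positivity)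
        nlinarith [hfac, mul_le_mul_of_nonneg_right hA sBab_nn, hcs1']
    exact no_poly hn β (fun x => (key x).1) (fun x => (key x).2)
end
end

section
/- Let u(x) be a real polynomial in n variables, v(x) an (m−1)-vector of real polynomials, and W(x) a symmetric (m−1)×(m−1) polynomial matrix, and let P(x) be the m×m symmetric polynomial matrix with block form P = [[u, vᵀ],[v, W]]. Define Z(x) = [[u, 0],[v, u·I_{m−1}]] (lower block-triangular) and Q(x) = the block-diagonal matrix with blocks u³ and u²·W − u·v vᵀ. Then u(x)⁴ · P(x) = Z(x) Q(x) Z(x)ᵀ identically. -/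
open MvPolynomial Matrix

noncomputable section

/-- Schmüdgen's diagonalization lemma. For a block symmetric polynomial
matrix `P = [[u, vᵀ],[v, W]]`, with `Z = [[u, 0],[v, u I]]` and
`Q = Diag(u³, u² W − u v vᵀ)`, one has `u⁴ • P = Z Q Zᵀ`. -/
theorem stmt10 (n r : ℕ)
    (u : MvPolynomial (Fin n) ℝ)
    (v : Fin r → MvPolynomial (Fin n) ℝ)
    (W : Matrix (Fin r) (Fin r) (MvPolynomial (Fin n) ℝ))
    (hW : W.IsSymm) :
    (u ^ 4) •
        (Matrix.fromBlocks (Matrix.of fun (_ : Unit) (_ : Unit) => u)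
          (Matrix.of fun (_ : Unit) j => v j) (Matrix.of fun i (_ : Unit) => v i) W)
      = (Matrix.fromBlocks (Matrix.of fun (_ : Unit) (_ : Unit) => u) 0
          (Matrix.of fun i (_ : Unit) => v i) (u • (1 : Matrix (Fin r) (Fin r) (MvPolynomial (Fin n) ℝ))))
        * (Matrix.fromBlocks (Matrix.of fun (_ : Unit) (_ : Unit) => u ^ 3) 0 0
            ((u ^ 2) • W - u • Matrix.vecMulVec v v))
        * (Matrix.fromBlocks (Matrix.of fun (_ : Unit) (_ : Unit) => u) 0
            (Matrix.of fun i (_ : Unit) => v i) (u • (1 : Matrix (Fin r) (Fin r) (MvPolynomial (Fin n) ℝ))))ᵀ := by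
  ext i j
  cases i <;> cases j <;>
    simp [Matrix.mul_apply, Matrix.fromBlocks, Matrix.vecMulVec, Matrix.one_apply,
      Finset.mul_sum, Finset.sum_mul, mul_comm, mul_left_comm, mul_assoc, hW.apply,
      sub_mul, mul_sub, Finset.sum_sub_distrib] <;> ring_nf
end
end

section
/- Fix a real number k with 0 ≤ k < 2 and let P(x) be the 3×3 univariate polynomial matrix P(x) = [[k+1+x², x+x², 0],[x+x², k+2x², x−x²],[0, x−x², k+1+x²]]. Then P(x) is positive semidefinite at every x ∈ ℝ, but there exist NO 2×2 polynomial matrices S_1(x), S_2(x), each positive semidefinite at every x ∈ ℝ, such that P(x) equals the 3×3 matrix obtained by placing S_1 in the principal submatrix indexed by {1,2} and S_2 in the principal submatrix indexed by {2,3} and summing (i.e., P = E_{C_1}ᵀ S_1 E_{C_1} + E_{C_2}ᵀ S_2 E_{C_2} with C_1 = {1,2}, C_2 = {2,3}). -/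
open Polynomial Matrix

noncomputable section

lemma psd2_det {M : Matrix (Fin 2) (Fin 2) ℝ} (h : M.PosSemidef) :
    M 0 1 * M 1 0 ≤ M 0 0 * M 1 1 := by
  have h10 : M 1 0 = M 0 1 := by
    conv_lhs => rw [← h.1]
    simp [conjTranspose_apply]
  have key : ∀ t : ℝ, 0 ≤ M 0 0 * (t * t) + (M 0 1 + M 1 0) * t + M 1 1 := by
    intro t
    have h2 := h.dotProduct_mulVec_nonneg ![t, 1]
    simp [dotProduct, Matrix.mulVec, Fin.sum_univ_two] at h2
    nlinarith [h2]
  have hd := discrim_le_zero key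
  rw [discrim] at hd
  nlinarith [hd]

/-- Example 1 / Proposition 1 of the paper, concrete instance.
For `0 ≤ k < 2`, the matrix `P(x) = [[k+1+x², x+x², 0],[x+x², k+2x², x−x²],[0, x−x², k+1+x²]]`
is positive semidefinite at every `x ∈ ℝ`, yet it admits no decomposition
`P = E₁ᵀ S₁ E₁ + E₂ᵀ S₂ E₂` with `S₁, S₂` 2×2 polynomial matrices positive semidefinite
at every `x ∈ ℝ`, where `E₁ = [[1,0,0],[0,1,0]]` and `E₂ = [[0,1,0],[0,0,1]]`. -/
theorem stmt11 (k : ℝ) (hk0 : 0 ≤ k) (hk2 : k < 2) :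
    (∀ x : ℝ,
      ((!![C k + 1 + X ^ 2, X + X ^ 2,     0;
           X + X ^ 2,     C k + 2 * X ^ 2, X - X ^ 2;
           0,             X - X ^ 2,     C k + 1 + X ^ 2] :
          Matrix (Fin 3) (Fin 3) (Polynomial ℝ)).map (Polynomial.eval x)).PosSemidef) ∧
    ¬ ∃ S₁ S₂ : Matrix (Fin 2) (Fin 2) (Polynomial ℝ),
        (∀ x : ℝ, (S₁.map (Polynomial.eval x)).PosSemidef) ∧
        (∀ x : ℝ, (S₂.map (Polynomial.eval x)).PosSemidef) ∧
        (!![C k + 1 + X ^ 2, X + X ^ 2,     0;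
            X + X ^ 2,     C k + 2 * X ^ 2, X - X ^ 2;
            0,             X - X ^ 2,     C k + 1 + X ^ 2] :
           Matrix (Fin 3) (Fin 3) (Polynomial ℝ))
          = (!![1, 0, 0; 0, 1, 0] : Matrix (Fin 2) (Fin 3) (Polynomial ℝ))ᵀ * S₁
              * (!![1, 0, 0; 0, 1, 0] : Matrix (Fin 2) (Fin 3) (Polynomial ℝ))
            + (!![0, 1, 0; 0, 0, 1] : Matrix (Fin 2) (Fin 3) (Polynomial ℝ))ᵀ * S₂
              * (!![0, 1, 0; 0, 0, 1] : Matrix (Fin 2) (Fin 3) (Polynomial ℝ)) := by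
  constructor
  · -- P(x) is positive semidefinite at every x
    intro x
    refine Matrix.PosSemidef.of_dotProduct_mulVec_nonneg ?_ ?_
    · ext i j
      fin_cases i <;> fin_cases j <;>
        simp [Matrix.conjTranspose_apply, Matrix.map_apply]
    · intro v
      simp [dotProduct, Matrix.mulVec, Fin.sum_univ_three, Matrix.map_apply]
      nlinarith [sq_nonneg ((1+x^2)*v 0 + (x+x^2)*v 1),
        sq_nonneg (x*(x-1)*v 1 - (1+x^2)*v 2),
        mul_nonneg hk0 (sq_nonneg (v 0)), mul_nonneg hk0 (sq_nonneg (v 1)),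
        mul_nonneg hk0 (sq_nonneg (v 2)), sq_nonneg x,
        mul_nonneg (mul_nonneg hk0 (sq_nonneg x)) (sq_nonneg (v 0)),
        mul_nonneg (mul_nonneg hk0 (sq_nonneg x)) (sq_nonneg (v 1)),
        mul_nonneg (mul_nonneg hk0 (sq_nonneg x)) (sq_nonneg (v 2))]
  · -- No clique decomposition exists
    rintro ⟨S₁, S₂, h1, h2, heq⟩
    have h := fun i j => congrFun (congrFun heq i) j
    have e00 := h 0 0
    have e01 := h 0 1
    have e10 := h 1 0
    have e11 := h 1 1
    have e12 := h 1 2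
    have e21 := h 2 1
    have e22 := h 2 2
    simp [Matrix.mul_apply, Matrix.add_apply, Matrix.transpose_apply,
      Fin.sum_univ_succ, Fin.sum_univ_two] at e00 e01 e10 e11 e12 e21 e22
    set s : Polynomial ℝ := S₁ 1 1 with hs_def
    -- inequality from S₁
    have hA : ∀ x : ℝ, (x + x^2) * (x + x^2) ≤ (k + 1 + x^2) * eval x s := by
      intro x
      have hd := psd2_det (h1 x)
      simp only [Matrix.map_apply] at hd
      rw [← e00, ← e01, ← e10] at hd
      simpa using hd
    -- inequality from S₂
    have hS200 : S₂ 0 0 = C k + 2 * X ^ 2 - s := by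
      rw [hs_def]; linear_combination -e11
    have hB : ∀ x : ℝ, (x - x^2) * (x - x^2) ≤ (k + 1 + x^2) * (k + 2*x^2 - eval x s) := by
      intro x
      have hd := psd2_det (h2 x)
      simp only [Matrix.map_apply] at hd
      rw [← e12, ← e21, ← e22, hS200] at hd
      simp only [eval_sub, eval_add, eval_mul, eval_pow, eval_X, eval_C, eval_one,
        eval_ofNat] at hd
      nlinarith [hd]
    -- s - (X^2 + 2X) is bounded, hence constant
    set q : Polynomial ℝ := s - (X^2 + 2*X) with hq_def
    have hbound : ∀ x : ℝ, |eval x q| ≤ 3*k + 2 := by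
      intro x
      have hevq : eval x q = eval x s - (x^2 + 2*x) := by simp [hq_def]
      have hD : (0:ℝ) < k + 1 + x^2 := by nlinarith [sq_nonneg x]
      rw [abs_le, hevq]
      constructor
      · nlinarith [hA x, sq_nonneg (x - 1), mul_nonneg hk0 (sq_nonneg x), hD,
          mul_pos hD hD]
      · nlinarith [hB x, sq_nonneg (x + 1), mul_nonneg hk0 (sq_nonneg x), hD,
          mul_pos hD hD]
    have hdeg : q.degree ≤ 0 := by
      by_contra hc
      push_neg at hc
      have ht := Polynomial.abs_tendsto_atTop q hc
      obtain ⟨x, hx⟩ := (ht.eventually_gt_atTop (3*k + 2)).exists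
      linarith [hbound x]
    have hqC : q = C (q.coeff 0) := Polynomial.eq_C_of_degree_le_zero hdeg
    set b : ℝ := q.coeff 0 with hb_def
    have hs_eval : ∀ x : ℝ, eval x s = x^2 + 2*x + b := by
      intro x
      have hb' : eval x q = b := by rw [hqC]; simp
      have h2' : eval x q = eval x s - (x^2 + 2*x) := by simp [hq_def]
      linarith
    -- quadratic inequalities in x
    have hA' : ∀ x : ℝ, 0 ≤ (b + k) * (x * x) + (2*(k+1)) * x + (k+1)*b := by
      intro x
      have := hA x
      rw [hs_eval x] at this
      nlinarith [this]
    have hB' : ∀ x : ℝ, 0 ≤ (2*k - b) * (x * x) + (-(2*(k+1))) * x + (k+1)*(k - b) := by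
      intro x
      have := hB x
      rw [hs_eval x] at this
      nlinarith [this]
    have d1 := discrim_le_zero hA'
    have d2 := discrim_le_zero hB'
    rw [discrim] at d1 d2
    have hb0 : 0 ≤ b := by
      have := hA' 0
      nlinarith [this]
    have hbk : b ≤ k := by
      have := hB' 0
      nlinarith [this]
    nlinarith [d1, d2, hb0, hbk, sq_nonneg (2*b - k), mul_nonneg hk0 hb0,
      mul_nonneg (sub_nonneg.mpr hbk) hb0, mul_nonneg hk0 (sq_nonneg (2*b - k)),
      mul_nonneg (mul_nonneg hk0 hk0) hk0]
end
end

section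
/- Let P(x) be the 3×3 polynomial matrix in variables x = (x_1,x_2,x_3) given by P(x) = [[x_1²+x_2², −x_1x_2, 0],[−x_1x_2, x_2²+x_3², −x_2x_3],[0, −x_2x_3, x_1²+x_3²]]. Then P(x) is positive semidefinite at every x ∈ ℝ³, but P is not an SOS matrix: there is no polynomial matrix H(x) with P(x) = H(x)ᵀH(x) identically. -/
open MvPolynomial Matrix

noncomputable section

/-- A symmetric polynomial matrix is SOS if it factors as `Hᵀ * H`. -/
def IsSOSMat {n : ℕ} {ι : Type*} [Fintype ι] (S : Matrix ι ι (MvPolynomial (Fin n) ℝ)) : Prop :=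
  ∃ (N : ℕ) (H : Matrix (Fin N) ι (MvPolynomial (Fin n) ℝ)), S = Hᵀ * H

namespace Stmt13Aux

/-- substitute `X i ↦ uᵢ·s + vᵢ·t`, landing in `(ℝ[s])[t]`. -/
noncomputable def Fh (u v : Fin 3 → ℝ) : MvPolynomial (Fin 3) ℝ →ₐ[ℝ] Polynomial (Polynomial ℝ) :=
  MvPolynomial.aeval fun i =>
    Polynomial.C (Polynomial.C (u i) * Polynomial.X) + Polynomial.C (Polynomial.C (v i)) * Polynomial.X

/-- substitute `X i ↦ uᵢ·s`. -/
noncomputable def Gh (u : Fin 3 → ℝ) : MvPolynomial (Fin 3) ℝ →ₐ[ℝ] Polynomial ℝ :=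
  MvPolynomial.aeval fun i => Polynomial.C (u i) * Polynomial.X

/-- the "directional linear coefficient" of `p` along `u`. -/
noncomputable def Lc (p : MvPolynomial (Fin 3) ℝ) (u : Fin 3 → ℝ) : ℝ := (Gh u p).coeff 1

/-- the constant term of `p`. -/
noncomputable def cT (p : MvPolynomial (Fin 3) ℝ) : ℝ := MvPolynomial.aeval (fun _ => (0:ℝ)) p

lemma coeff_one_mul' {R : Type*} [CommSemiring R] (a b : Polynomial R) :
    (a * b).coeff 1 = a.coeff 0 * b.coeff 1 + a.coeff 1 * b.coeff 0 := by
  rw [Polynomial.coeff_mul]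
  rw [show (Finset.HasAntidiagonal.antidiagonal 1 : Finset (ℕ × ℕ)) = {(0,1),(1,0)} from rfl]
  simp

lemma Fcoeff0 (u v : Fin 3 → ℝ) (p : MvPolynomial (Fin 3) ℝ) :
    (Fh u v p).coeff 0 = Gh u p := by
  have h2 : ((AlgHom.restrictScalars ℝ (Polynomial.aeval (0 : Polynomial ℝ))).comp (Fh u v)) = Gh u := by
    apply MvPolynomial.algHom_ext; intro i; simp [Fh, Gh]
  have h : (Polynomial.eval (0 : Polynomial ℝ) (Fh u v p)) =
      ((Polynomial.aeval (0 : Polynomial ℝ)).restrictScalars ℝ) (Fh u v p) := by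
    simp [Polynomial.aeval_def, Polynomial.eval]
  rw [Polynomial.coeff_zero_eq_eval_zero, h]
  exact DFunLike.congr_fun h2 p

lemma Fcoeff10 (u v : Fin 3 → ℝ) (p : MvPolynomial (Fin 3) ℝ) :
    ((Fh u v p).coeff 1).coeff 0 = Lc p v := by
  have h2 : ((Polynomial.mapAlgHom (Polynomial.aeval (0:ℝ))).comp (Fh u v)) = Gh v := by
    apply MvPolynomial.algHom_ext; intro i
    simp [Fh, Gh, Polynomial.coe_mapAlgHom]
  have h3 := DFunLike.congr_fun h2 p
  simp only [AlgHom.comp_apply, Polynomial.coe_mapAlgHom] at h3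
  rw [Polynomial.coeff_zero_eq_eval_zero, ← Polynomial.coe_aeval_eq_eval, Lc, ← h3]
  rw [Polynomial.coeff_map]
  rfl

lemma Gcoeff0 (u : Fin 3 → ℝ) (p : MvPolynomial (Fin 3) ℝ) :
    (Gh u p).coeff 0 = cT p := by
  have h2 : ((Polynomial.aeval (0:ℝ)).comp (Gh u)) = MvPolynomial.aeval (fun _ => (0:ℝ)) := by
    apply MvPolynomial.algHom_ext; intro i; simp [Gh]
  have h3 := DFunLike.congr_fun h2 p
  simp only [AlgHom.comp_apply] at h3
  rw [Polynomial.coeff_zero_eq_eval_zero, ← Polynomial.coe_aeval_eq_eval, cT, ← h3]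

lemma key (u v : Fin 3 → ℝ) (p q : MvPolynomial (Fin 3) ℝ) (hp : cT p = 0) (hq : cT q = 0) :
    ((Fh u v (p * q)).coeff 1).coeff 1 = Lc p u * Lc q v + Lc p v * Lc q u := by
  rw [_root_.map_mul, coeff_one_mul', Polynomial.coeff_add, coeff_one_mul', coeff_one_mul']
  rw [Fcoeff0, Fcoeff0, Fcoeff10, Fcoeff10, Gcoeff0, Gcoeff0, hp, hq]
  simp only [zero_mul, mul_zero, zero_add, add_zero]
  rfl

lemma cT_X (i : Fin 3) : cT (X i) = 0 := by simp [cT]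

lemma Lc_X (u : Fin 3 → ℝ) (i : Fin 3) : Lc (X i) u = u i := by
  simp [Lc, Gh]

lemma keyXX (u v : Fin 3 → ℝ) (i j : Fin 3) :
    ((Fh u v (X i * X j)).coeff 1).coeff 1 = u i * v j + v i * u j := by
  rw [key u v _ _ (cT_X i) (cT_X j), Lc_X, Lc_X, Lc_X, Lc_X]

/-- Main relation-extraction lemma. -/
lemma relation {N : ℕ} (u v : Fin 3 → ℝ) (p q : Fin N → MvPolynomial (Fin 3) ℝ)
    (Q : MvPolynomial (Fin 3) ℝ) (h : ∑ k, p k * q k = Q)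
    (hp : ∀ k, cT (p k) = 0) (hq : ∀ k, cT (q k) = 0) :
    ∑ k, (Lc (p k) u * Lc (q k) v + Lc (p k) v * Lc (q k) u)
      = ((Fh u v Q).coeff 1).coeff 1 := by
  rw [← h, map_sum, Polynomial.finset_sum_coeff, Polynomial.finset_sum_coeff]
  exact Finset.sum_congr rfl fun k _ => (key u v _ _ (hp k) (hq k)).symm

lemma cT_zero {N : ℕ} (p : Fin N → MvPolynomial (Fin 3) ℝ)
    (Q : MvPolynomial (Fin 3) ℝ) (h : ∑ k, p k * p k = Q) (hQ : cT Q = 0) :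
    ∀ k, cT (p k) = 0 := by
  have hs : ∑ k, cT (p k) * cT (p k) = 0 := by
    have := congrArg (MvPolynomial.aeval (fun _ => (0:ℝ))) h
    rw [map_sum] at this
    simp only [_root_.map_mul] at this
    simp only [cT]
    rw [this]; exact hQ
  intro k
  have := (Finset.sum_eq_zero_iff_of_nonneg (fun i _ => mul_self_nonneg (cT (p i)))).1
    hs k (Finset.mem_univ k)
  exact mul_self_eq_zero.mp this

lemma sq_sum_zero {N : ℕ} (z : Fin N → ℝ) (h : ∑ k, z k * z k = 0) : ∀ k, z k = 0 := by
  intro k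
  have := (Finset.sum_eq_zero_iff_of_nonneg (fun i _ => mul_self_nonneg (z i))).1
    h k (Finset.mem_univ k)
  exact mul_self_eq_zero.mp this

end Stmt13Aux

open Stmt13Aux in
/-- Example 2 of the paper. The matrix
`P = [[x₁²+x₂², −x₁x₂, 0],[−x₁x₂, x₂²+x₃², −x₂x₃],[0, −x₂x₃, x₁²+x₃²]]` is positive
semidefinite at every point of `ℝ³` but is not an SOS matrix. -/
theorem stmt13 :
    (∀ x : Fin 3 → ℝ,
      (evalMat (!![X 0 ^ 2 + X 1 ^ 2, -(X 0 * X 1),      0;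
                   -(X 0 * X 1),      X 1 ^ 2 + X 2 ^ 2, -(X 1 * X 2);
                   0,                 -(X 1 * X 2),      X 0 ^ 2 + X 2 ^ 2] :
          Matrix (Fin 3) (Fin 3) (MvPolynomial (Fin 3) ℝ)) x).PosSemidef) ∧
    ¬ IsSOSMat (!![X 0 ^ 2 + X 1 ^ 2, -(X 0 * X 1),      0;
                   -(X 0 * X 1),      X 1 ^ 2 + X 2 ^ 2, -(X 1 * X 2);
                   0,                 -(X 1 * X 2),      X 0 ^ 2 + X 2 ^ 2] :
        Matrix (Fin 3) (Fin 3) (MvPolynomial (Fin 3) ℝ)) := by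
  constructor
  · -- positive semidefiniteness at every point
    intro x
    rw [Matrix.posSemidef_iff_dotProduct_mulVec]; constructor
    · ext i j
      fin_cases i <;> fin_cases j <;>
        simp [evalMat, Matrix.conjTranspose_apply, Matrix.map_apply]
    · intro v
      have hq : (star v) ⬝ᵥ ((evalMat (!![X 0 ^ 2 + X 1 ^ 2, -(X 0 * X 1), 0;
          -(X 0 * X 1), X 1 ^ 2 + X 2 ^ 2, -(X 1 * X 2);
          0, -(X 1 * X 2), X 0 ^ 2 + X 2 ^ 2] :
          Matrix (Fin 3) (Fin 3) (MvPolynomial (Fin 3) ℝ)) x) *ᵥ v)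
          = (x 0 ^ 2 + x 1 ^ 2) * v 0 ^ 2 - 2 * (x 0 * x 1) * v 0 * v 1
            + (x 1 ^ 2 + x 2 ^ 2) * v 1 ^ 2 - 2 * (x 1 * x 2) * v 1 * v 2
            + (x 0 ^ 2 + x 2 ^ 2) * v 2 ^ 2 := by
        simp [evalMat, Matrix.mulVec, dotProduct, Fin.sum_univ_three, Matrix.map_apply]
        ring
      rw [hq]
      by_cases h12 : x 1 = 0 ∧ x 2 = 0
      · rw [h12.1, h12.2]; nlinarith [sq_nonneg (x 0 * v 0), sq_nonneg (x 0 * v 2)]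
      · have hpos : 0 < x 1 ^ 2 + x 2 ^ 2 := by
          rcases not_and_or.mp h12 with h | h
          · have := mul_self_pos.mpr h
            nlinarith [sq_nonneg (x 2)]
          · have := mul_self_pos.mpr h
            nlinarith [sq_nonneg (x 1)]
        nlinarith [hpos,
          sq_nonneg ((x 1 ^ 2 + x 2 ^ 2) * v 1 - x 0 * x 1 * v 0 - x 1 * x 2 * v 2),
          sq_nonneg (x 1 ^ 2 * v 0 - x 0 * x 2 * v 2),
          sq_nonneg (x 0 * x 2 * v 0), sq_nonneg (x 1 * x 2 * v 0),
          sq_nonneg (x 0 * x 1 * v 2), sq_nonneg (x 2 ^ 2 * v 2)]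
  · -- not an SOS matrix
    rintro ⟨N, H, hH⟩
    -- entrywise equations
    have entry : ∀ i j : Fin 3,
        (!![X 0 ^ 2 + X 1 ^ 2, -(X 0 * X 1), 0;
           -(X 0 * X 1), X 1 ^ 2 + X 2 ^ 2, -(X 1 * X 2);
           0, -(X 1 * X 2), X 0 ^ 2 + X 2 ^ 2] :
          Matrix (Fin 3) (Fin 3) (MvPolynomial (Fin 3) ℝ)) i j = ∑ k, H k i * H k j := by
      intro i j
      have := congrFun (congrFun hH i) j
      rw [this, Matrix.mul_apply]
      simp [Matrix.transpose_apply]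
    set p : Fin N → MvPolynomial (Fin 3) ℝ := fun k => H k 0 with hp
    set q : Fin N → MvPolynomial (Fin 3) ℝ := fun k => H k 1 with hqdef
    set r : Fin N → MvPolynomial (Fin 3) ℝ := fun k => H k 2 with hr
    have h00 : ∑ k, p k * p k = X 0 ^ 2 + X 1 ^ 2 := by
      have := entry 0 0; simpa using this.symm
    have h11 : ∑ k, q k * q k = X 1 ^ 2 + X 2 ^ 2 := by
      have := entry 1 1; simpa using this.symm
    have h22 : ∑ k, r k * r k = X 0 ^ 2 + X 2 ^ 2 := by
      have := entry 2 2; simpa using this.symm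
    have h01 : ∑ k, p k * q k = -(X 0 * X 1) := by
      have := entry 0 1; simpa using this.symm
    have h12 : ∑ k, q k * r k = -(X 1 * X 2) := by
      have := entry 1 2; simpa using this.symm
    have h02 : ∑ k, p k * r k = (0 : MvPolynomial (Fin 3) ℝ) := by
      have := entry 0 2; simpa using this.symm
    -- constant terms vanish
    have hp0 : ∀ k, cT (p k) = 0 := cT_zero p _ h00 (by simp [cT])
    have hq0 : ∀ k, cT (q k) = 0 := cT_zero q _ h11 (by simp [cT])
    have hr0 : ∀ k, cT (r k) = 0 := cT_zero r _ h22 (by simp [cT])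
    -- basis directions
    set e0 : Fin 3 → ℝ := ![1,0,0] with he0
    set e1 : Fin 3 → ℝ := ![0,1,0] with he1
    set e2 : Fin 3 → ℝ := ![0,0,1] with he2
    -- coefficient-of-(s·t) value for the right-hand sides
    have c11sq : ∀ (u v : Fin 3 → ℝ) (i : Fin 3),
        ((Fh u v (X i ^ 2)).coeff 1).coeff 1 = 2 * (u i * v i) := by
      intro u v i
      rw [pow_two, keyXX]; ring
    have c11add : ∀ (u v : Fin 3 → ℝ) (i j : Fin 3),
        ((Fh u v (X i ^ 2 + X j ^ 2)).coeff 1).coeff 1 = 2 * (u i * v i) + 2 * (u j * v j) := by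
      intro u v i j
      rw [map_add, Polynomial.coeff_add, Polynomial.coeff_add, c11sq, c11sq]
    have c11neg : ∀ (u v : Fin 3 → ℝ) (i j : Fin 3),
        ((Fh u v (-(X i * X j))).coeff 1).coeff 1 = -(u i * v j + v i * u j) := by
      intro u v i j
      rw [map_neg, Polynomial.coeff_neg, Polynomial.coeff_neg, keyXX]
    have c11zero : ∀ (u v : Fin 3 → ℝ),
        ((Fh u v (0 : MvPolynomial (Fin 3) ℝ)).coeff 1).coeff 1 = 0 := by
      intro u v; rw [map_zero]; simp
    -- define the real vectors
    set a : Fin N → ℝ := fun k => Lc (p k) e0 with ha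
    set c : Fin N → ℝ := fun k => Lc (q k) e1 with hc
    set f : Fin N → ℝ := fun k => Lc (r k) e2 with hf
    -- diagonal relations
    have haa : ∑ k, a k * a k = 1 := by
      have := relation e0 e0 p p _ h00 hp0 hp0
      rw [c11add] at this
      simp only [he0] at this
      have h2 : ∑ k, (a k * a k + a k * a k) = 2 := by
        rw [this]; norm_num
      have h3 : ∑ k, (a k * a k + a k * a k) = 2 * ∑ k, a k * a k := by
        rw [Finset.mul_sum]; exact Finset.sum_congr rfl fun k _ => by ring
      linarith [h3 ▸ h2]
    have hcc : ∑ k, c k * c k = 1 := by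
      have := relation e1 e1 q q _ h11 hq0 hq0
      rw [c11add] at this
      simp only [he1, Matrix.cons_val] at this
      have h2 : ∑ k, (c k * c k + c k * c k) = 2 := by
        rw [this]; norm_num
      have h3 : ∑ k, (c k * c k + c k * c k) = 2 * ∑ k, c k * c k := by
        rw [Finset.mul_sum]; exact Finset.sum_congr rfl fun k _ => by ring
      linarith [h3 ▸ h2]
    have hff : ∑ k, f k * f k = 1 := by
      have := relation e2 e2 r r _ h22 hr0 hr0
      rw [c11add] at this
      simp only [he2, Matrix.cons_val] at this
      have h2 : ∑ k, (f k * f k + f k * f k) = 2 := by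
        rw [this]; norm_num
      have h3 : ∑ k, (f k * f k + f k * f k) = 2 * ∑ k, f k * f k := by
        rw [Finset.mul_sum]; exact Finset.sum_congr rfl fun k _ => by ring
      linarith [h3 ▸ h2]
    -- auxiliary vanishing directions
    have hz2 : ∀ k, Lc (q k) e0 = 0 := by
      have := relation e0 e0 q q _ h11 hq0 hq0
      rw [c11add] at this
      simp only [he0, Matrix.cons_val] at this
      apply sq_sum_zero
      have h3 : ∑ k, (Lc (q k) e0 * Lc (q k) e0 + Lc (q k) e0 * Lc (q k) e0)
          = 2 * ∑ k, Lc (q k) e0 * Lc (q k) e0 := by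
        rw [Finset.mul_sum]; exact Finset.sum_congr rfl fun k _ => by ring
      rw [h3] at this
      norm_num at this
      linarith [this]
    have hz1 : ∀ k, Lc (p k) e2 = 0 := by
      have := relation e2 e2 p p _ h00 hp0 hp0
      rw [c11add] at this
      simp only [he2] at this
      apply sq_sum_zero
      have h3 : ∑ k, (Lc (p k) e2 * Lc (p k) e2 + Lc (p k) e2 * Lc (p k) e2)
          = 2 * ∑ k, Lc (p k) e2 * Lc (p k) e2 := by
        rw [Finset.mul_sum]; exact Finset.sum_congr rfl fun k _ => by ring
      rw [h3] at this
      norm_num at this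
      linarith [this]
    have hz3 : ∀ k, Lc (r k) e1 = 0 := by
      have := relation e1 e1 r r _ h22 hr0 hr0
      rw [c11add] at this
      simp only [he1, Matrix.cons_val] at this
      apply sq_sum_zero
      have h3 : ∑ k, (Lc (r k) e1 * Lc (r k) e1 + Lc (r k) e1 * Lc (r k) e1)
          = 2 * ∑ k, Lc (r k) e1 * Lc (r k) e1 := by
        rw [Finset.mul_sum]; exact Finset.sum_congr rfl fun k _ => by ring
      rw [h3] at this
      norm_num at this
      linarith [this]
    -- cross relations
    have hac : ∑ k, a k * c k = -1 := by
      have := relation e0 e1 p q _ h01 hp0 hq0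
      rw [c11neg] at this
      simp only [he0, he1] at this
      norm_num at this
      rw [← this]
      apply Finset.sum_congr rfl
      intro k _
      rw [hz2 k]; ring
    have hcf : ∑ k, c k * f k = -1 := by
      have := relation e1 e2 q r _ h12 hq0 hr0
      rw [c11neg] at this
      simp only [he1, he2, Matrix.cons_val] at this
      norm_num at this
      rw [← this]
      apply Finset.sum_congr rfl
      intro k _
      rw [hz3 k]; ring
    have haf : ∑ k, a k * f k = 0 := by
      have := relation e0 e2 p r _ h02 hp0 hr0
      rw [c11zero] at this
      rw [← this]
      apply Finset.sum_congr rfl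
      intro k _
      rw [hz1 k]; ring
    -- derive the contradiction
    have hacz : ∀ k, a k + c k = 0 := by
      apply sq_sum_zero
      have : ∑ k, (a k + c k) * (a k + c k)
          = (∑ k, a k * a k) + 2 * (∑ k, a k * c k) + ∑ k, c k * c k := by
        rw [Finset.mul_sum, ← Finset.sum_add_distrib, ← Finset.sum_add_distrib]
        exact Finset.sum_congr rfl fun k _ => by ring
      rw [this, haa, hac, hcc]; ring
    have hcfz : ∀ k, c k + f k = 0 := by
      apply sq_sum_zero
      have : ∑ k, (c k + f k) * (c k + f k)
          = (∑ k, c k * c k) + 2 * (∑ k, c k * f k) + ∑ k, f k * f k := by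
        rw [Finset.mul_sum, ← Finset.sum_add_distrib, ← Finset.sum_add_distrib]
        exact Finset.sum_congr rfl fun k _ => by ring
      rw [this, hcc, hcf, hff]; ring
    have : ∑ k, a k * f k = 1 := by
      have : ∑ k, a k * f k = ∑ k, c k * c k := by
        apply Finset.sum_congr rfl
        intro k _
        have h1 : a k = -c k := by linarith [hacz k]
        have h2 : f k = -c k := by linarith [hcfz k]
        rw [h1, h2]; ring
      rw [this, hcc]
    rw [haf] at this
    norm_num at this
end
end

section
/- Let P(x) be the 3×3 polynomial matrix in variables x = (x_1,x_2,x_3) given by P(x) = [[x_1²+x_2², −x_1x_2, 0],[−x_1x_2, x_2²+x_3², −x_2x_3],[0, −x_2x_3, x_1²+x_3²]]. Then there exist 2×2 SOS matrices S_1(x) and S_2(x) such that (x_1² + x_2²)·P(x) = E_{C_1}ᵀ S_1(x) E_{C_1} + E_{C_2}ᵀ S_2(x) E_{C_2} identically, where C_1 = {1,2} and C_2 = {2,3}. -/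
open MvPolynomial Matrix

noncomputable section

set_option maxHeartbeats 2000000 in
/-- Example 2 of the paper. The matrix
`P = [[x₁²+x₂², −x₁x₂, 0],[−x₁x₂, x₂²+x₃², −x₂x₃],[0, −x₂x₃, x₁²+x₃²]]` admits a
weighted chordal decomposition `(x₁²+x₂²) • P = E₁ᵀ S₁ E₁ + E₂ᵀ S₂ E₂` with `S₁, S₂`
2×2 SOS matrices, where `E₁ = [[1,0,0],[0,1,0]]` and `E₂ = [[0,1,0],[0,0,1]]`. -/
theorem stmt14 :
    ∃ S₁ S₂ : Matrix (Fin 2) (Fin 2) (MvPolynomial (Fin 3) ℝ),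
      IsSOSMat S₁ ∧ IsSOSMat S₂ ∧
      ((X 0 : MvPolynomial (Fin 3) ℝ) ^ 2 + X 1 ^ 2) •
          (!![X 0 ^ 2 + X 1 ^ 2, -(X 0 * X 1),      0;
              -(X 0 * X 1),      X 1 ^ 2 + X 2 ^ 2, -(X 1 * X 2);
              0,                 -(X 1 * X 2),      X 0 ^ 2 + X 2 ^ 2] :
            Matrix (Fin 3) (Fin 3) (MvPolynomial (Fin 3) ℝ))
        = (!![1, 0, 0; 0, 1, 0] : Matrix (Fin 2) (Fin 3) (MvPolynomial (Fin 3) ℝ))ᵀ * S₁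
            * (!![1, 0, 0; 0, 1, 0] : Matrix (Fin 2) (Fin 3) (MvPolynomial (Fin 3) ℝ))
          + (!![0, 1, 0; 0, 0, 1] : Matrix (Fin 2) (Fin 3) (MvPolynomial (Fin 3) ℝ))ᵀ * S₂
            * (!![0, 1, 0; 0, 0, 1] : Matrix (Fin 2) (Fin 3) (MvPolynomial (Fin 3) ℝ)) := by
  set x₀ : MvPolynomial (Fin 3) ℝ := X 0
  set x₁ : MvPolynomial (Fin 3) ℝ := X 1
  set x₂ : MvPolynomial (Fin 3) ℝ := X 2
  refine ⟨(!![x₀^2 + x₁^2, -(x₀*x₁)] : Matrix (Fin 1) (Fin 2) _)ᵀ *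
            (!![x₀^2 + x₁^2, -(x₀*x₁)] : Matrix (Fin 1) (Fin 2) _),
          (!![x₀*x₂, -(x₀*x₁); x₁^2, -(x₁*x₂); x₁*x₂, 0; 0, x₀^2; 0, x₀*x₂] :
            Matrix (Fin 5) (Fin 2) _)ᵀ *
          (!![x₀*x₂, -(x₀*x₁); x₁^2, -(x₁*x₂); x₁*x₂, 0; 0, x₀^2; 0, x₀*x₂] :
            Matrix (Fin 5) (Fin 2) _),
          ⟨1, _, rfl⟩, ⟨5, _, rfl⟩, ?_⟩
  refine Matrix.ext fun i j => ?_
  fin_cases i <;> fin_cases j <;>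
    simp [Matrix.mul_apply, Fin.sum_univ_succ, Matrix.smul_apply] <;> ring
end
end

section
/- Let P(x) be the 3×3 polynomial matrix in variables x = (x_1,x_2) given by P(x) = [[x_2⁴ + x_1²x_2², x_1²x_2², 0],[x_1²x_2², 2x_1⁴, x_1²x_2²],[0, x_1²x_2², x_2⁴ + x_1²x_2²]]. Then for every natural number ν, the matrix coefficient of the monomial x_1² x_2^{2ν+2} in the expansion of (x_1² + x_2²)^ν · P(x) equals [[ν+1, 1, 0],[1, 0, 1],[0, 1, ν+1]], and this real matrix is not positive semidefinite for any ν. -/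
open MvPolynomial Matrix

noncomputable section

private abbrev Spoly : MvPolynomial (Fin 2) ℝ := X 0 ^ 2 + X 1 ^ 2

private abbrev dmon (ν : ℕ) : Fin 2 →₀ ℕ :=
  Finsupp.single (0 : Fin 2) 2 + Finsupp.single (1 : Fin 2) (2 * ν + 2)

private lemma sub_s1 (a b c : ℕ) (h : c ≤ b) :
    (Finsupp.single (0 : Fin 2) a + Finsupp.single (1 : Fin 2) b) - Finsupp.single (1 : Fin 2) c
      = Finsupp.single (0 : Fin 2) a + Finsupp.single (1 : Fin 2) (b - c) := by
  ext s; fin_cases s <;>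
    simp [Finsupp.sub_apply, Finsupp.add_apply, Finsupp.single_apply]

private lemma sub_s0 (a b c : ℕ) (h : c ≤ a) :
    (Finsupp.single (0 : Fin 2) a + Finsupp.single (1 : Fin 2) b) - Finsupp.single (0 : Fin 2) c
      = Finsupp.single (0 : Fin 2) (a - c) + Finsupp.single (1 : Fin 2) b := by
  ext s; fin_cases s <;>
    simp [Finsupp.sub_apply, Finsupp.add_apply, Finsupp.single_apply]

private lemma le_s1 (a b c : ℕ) (h : c ≤ b) :
    Finsupp.single (1 : Fin 2) c ≤ Finsupp.single (0 : Fin 2) a + Finsupp.single (1 : Fin 2) b := by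
  rw [Finsupp.le_def]; intro s; fin_cases s <;>
    simp [Finsupp.add_apply, Finsupp.single_apply] <;> omega

private lemma le_s0 (a b c : ℕ) (h : c ≤ a) :
    Finsupp.single (0 : Fin 2) c ≤ Finsupp.single (0 : Fin 2) a + Finsupp.single (1 : Fin 2) b := by
  rw [Finsupp.le_def]; intro s; fin_cases s <;>
    simp [Finsupp.add_apply, Finsupp.single_apply] <;> omega

private lemma le_s01 (a b c e : ℕ) (h : c ≤ a) (h' : e ≤ b) :
    Finsupp.single (0 : Fin 2) c + Finsupp.single (1 : Fin 2) e
      ≤ Finsupp.single (0 : Fin 2) a + Finsupp.single (1 : Fin 2) b := by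
  rw [Finsupp.le_def]; intro s; fin_cases s <;>
    simp [Finsupp.add_apply, Finsupp.single_apply] <;> omega

private lemma sub_s01 (a b c e : ℕ) (h : c ≤ a) (h' : e ≤ b) :
    (Finsupp.single (0 : Fin 2) a + Finsupp.single (1 : Fin 2) b)
        - (Finsupp.single (0 : Fin 2) c + Finsupp.single (1 : Fin 2) e)
      = Finsupp.single (0 : Fin 2) (a - c) + Finsupp.single (1 : Fin 2) (b - e) := by
  ext s; fin_cases s <;>
    simp [Finsupp.sub_apply, Finsupp.add_apply, Finsupp.single_apply]

private lemma nle_s0 (a b c : ℕ) (h : a < c) :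
    ¬ Finsupp.single (0 : Fin 2) c ≤ Finsupp.single (0 : Fin 2) a + Finsupp.single (1 : Fin 2) b := by
  intro hle
  have := Finsupp.le_def.mp hle 0
  simp [Finsupp.add_apply, Finsupp.single_apply] at this; omega

private lemma nle_s1 (a b c : ℕ) (h : b < c) :
    ¬ Finsupp.single (1 : Fin 2) c ≤ Finsupp.single (0 : Fin 2) a + Finsupp.single (1 : Fin 2) b := by
  intro hle
  have := Finsupp.le_def.mp hle 1
  simp [Finsupp.add_apply, Finsupp.single_apply] at this; omega

private lemma nle_s0' (b c : ℕ) (hc : 0 < c) :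
    ¬ Finsupp.single (0 : Fin 2) c ≤ Finsupp.single (1 : Fin 2) b := by
  intro hle
  have := Finsupp.le_def.mp hle 0
  simp [Finsupp.single_apply] at this; omega

private lemma Sdef : (Spoly : MvPolynomial (Fin 2) ℝ)
    = monomial (Finsupp.single (0 : Fin 2) 2) 1 + monomial (Finsupp.single (1 : Fin 2) 2) 1 := by
  rw [← X_pow_eq_monomial, ← X_pow_eq_monomial]

private lemma Spow (ν : ℕ) : Spoly ^ (ν + 1) =
    Spoly ^ ν * monomial (Finsupp.single (0 : Fin 2) 2) (1 : ℝ)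
      + Spoly ^ ν * monomial (Finsupp.single (1 : Fin 2) 2) (1 : ℝ) := by
  rw [pow_succ]; nth_rewrite 2 [Sdef]; rw [mul_add]

private lemma F1 : ∀ ν : ℕ, coeff (Finsupp.single (1 : Fin 2) (2 * ν)) (Spoly ^ ν) = 1 := by
  intro ν
  induction ν with
  | zero => simp
  | succ k ih =>
    rw [Spow, coeff_add, coeff_mul_monomial', coeff_mul_monomial',
      if_neg (nle_s0' _ _ (by omega)), if_pos (by
        rw [Finsupp.single_le_iff]; simp [Finsupp.single_apply])]
    have hs : Finsupp.single (1 : Fin 2) (2 * (k + 1)) - Finsupp.single (1 : Fin 2) 2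
        = Finsupp.single (1 : Fin 2) (2 * k) := by
      rw [← Finsupp.single_tsub, show 2 * (k + 1) - 2 = 2 * k from by omega]
    rw [hs, ih]; norm_num

private lemma F2 : ∀ ν : ℕ,
    coeff (Finsupp.single (0 : Fin 2) 2 + Finsupp.single (1 : Fin 2) (2 * ν))
      (Spoly ^ (ν + 1)) = (ν : ℝ) + 1 := by
  intro ν
  induction ν with
  | zero =>
    simp only [Nat.mul_zero, Finsupp.single_zero, add_zero, zero_add, pow_one]
    rw [Sdef, coeff_add, coeff_monomial, coeff_monomial, if_pos rfl, if_neg (by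
      intro h
      have := DFunLike.congr_fun h 0
      simp [Finsupp.single_apply] at this)]
    norm_num
  | succ k ih =>
    rw [Spow, coeff_add, coeff_mul_monomial', coeff_mul_monomial',
      if_pos (le_s0 _ _ _ (by omega)), if_pos (le_s1 _ _ _ (by omega)),
      sub_s0 _ _ _ (by omega), sub_s1 _ _ _ (by omega)]
    have h1 : (2 : ℕ) - 2 = 0 := rfl
    have h2 : 2 * (k + 1) - 2 = 2 * k := by omega
    rw [h1, h2, Finsupp.single_zero, zero_add, F1 (k + 1), ih]
    push_cast; ring

private lemma E2 (ν : ℕ) : coeff (dmon ν) (Spoly ^ ν * (X 0 ^ 2 * X 1 ^ 2)) = 1 := by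
  rw [show (X 0 ^ 2 * X 1 ^ 2 : MvPolynomial (Fin 2) ℝ)
      = monomial (Finsupp.single (0 : Fin 2) 2 + Finsupp.single (1 : Fin 2) 2) 1 by
        rw [X_pow_eq_monomial, X_pow_eq_monomial, monomial_mul, one_mul],
    coeff_mul_monomial', if_pos (le_s01 _ _ _ _ (by omega) (by omega)), dmon,
    sub_s01 _ _ _ _ (by omega) (by omega)]
  have h1 : (2 : ℕ) - 2 = 0 := rfl
  have h2 : 2 * ν + 2 - 2 = 2 * ν := by omega
  rw [h1, h2, Finsupp.single_zero, zero_add, F1, mul_one]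

private lemma E14 (ν : ℕ) : coeff (dmon ν) (Spoly ^ ν * (X 1 ^ 4)) = (ν : ℝ) := by
  rw [X_pow_eq_monomial, coeff_mul_monomial']
  match ν with
  | 0 => rw [if_neg (nle_s1 _ _ _ (by omega))]; norm_num
  | k + 1 =>
    rw [if_pos (le_s1 _ _ _ (by omega)), dmon, sub_s1 _ _ _ (by omega),
      show 2 * (k + 1) + 2 - 4 = 2 * k from by omega, F2, mul_one]
    push_cast; ring

private lemma E1 (ν : ℕ) :
    coeff (dmon ν) (Spoly ^ ν * (X 1 ^ 4 + X 0 ^ 2 * X 1 ^ 2)) = (ν : ℝ) + 1 := by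
  rw [mul_add, coeff_add, E2, E14]

private lemma E3 (ν : ℕ) : coeff (dmon ν) (Spoly ^ ν * (2 * X 0 ^ 4)) = 0 := by
  have h2 : (2 : MvPolynomial (Fin 2) ℝ) = C 2 := (map_ofNat C 2).symm
  rw [X_pow_eq_monomial, h2, C_mul_monomial,
    coeff_mul_monomial', if_neg (nle_s0 _ _ _ (by omega))]

/-- Remark after Theorem 3. For
`P = [[x₂⁴+x₁²x₂², x₁²x₂², 0],[x₁²x₂², 2x₁⁴, x₁²x₂²],[0, x₁²x₂², x₂⁴+x₁²x₂²]]`, for every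
`ν ∈ ℕ` the matrix coefficient of the monomial `x₁² x₂^{2ν+2}` in `(x₁²+x₂²)^ν • P`
is `[[ν+1, 1, 0],[1, 0, 1],[0, 1, ν+1]]`, and this matrix is never positive
semidefinite. -/
theorem stmt15 :
    ∀ ν : ℕ,
      (Matrix.of fun i j : Fin 3 =>
          MvPolynomial.coeff (Finsupp.single (0 : Fin 2) 2 + Finsupp.single (1 : Fin 2) (2 * ν + 2))
            ((((∑ i : Fin 2, (X i : MvPolynomial (Fin 2) ℝ) ^ 2) ^ ν) •
              (!![X 1 ^ 4 + X 0 ^ 2 * X 1 ^ 2, X 0 ^ 2 * X 1 ^ 2,        0;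
                  X 0 ^ 2 * X 1 ^ 2,           2 * X 0 ^ 4,              X 0 ^ 2 * X 1 ^ 2;
                  0,                           X 0 ^ 2 * X 1 ^ 2,        X 1 ^ 4 + X 0 ^ 2 * X 1 ^ 2] :
                Matrix (Fin 3) (Fin 3) (MvPolynomial (Fin 2) ℝ))) i j))
        = (!![(ν : ℝ) + 1, 1, 0; 1, 0, 1; 0, 1, (ν : ℝ) + 1] : Matrix (Fin 3) (Fin 3) ℝ) ∧
      ¬ (!![(ν : ℝ) + 1, 1, 0; 1, 0, 1; 0, 1, (ν : ℝ) + 1] :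
          Matrix (Fin 3) (Fin 3) ℝ).PosSemidef := by
  intro ν
  have hS : (∑ i : Fin 2, (X i : MvPolynomial (Fin 2) ℝ) ^ 2) = Spoly := by
    rw [Fin.sum_univ_two]
  refine ⟨?_, ?_⟩
  · ext i j
    fin_cases i <;> fin_cases j <;>
      simp only [Matrix.of_apply, hS, Matrix.smul_apply, smul_eq_mul,
        Matrix.cons_val', Matrix.cons_val_zero, Matrix.cons_val_one, Matrix.head_cons,
        Matrix.empty_val', Matrix.cons_val_fin_one, Matrix.head_fin_const,
        Matrix.cons_val_two, Matrix.tail_cons]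
    · exact E1 ν
    · exact E2 ν
    · simp
    · exact E2 ν
    · exact E3 ν
    · exact E2 ν
    · simp
    · exact E2 ν
    · exact E1 ν
  · intro h
    have hv := h.dotProduct_mulVec_nonneg ![1, -((ν : ℝ) + 1), 1]
    simp [Matrix.mulVec, dotProduct, Fin.sum_univ_three] at hv
    have hν : (0 : ℝ) ≤ ν := Nat.cast_nonneg ν
    nlinarith [hv]
end
end

section
/- Let P(x) be the 3×3 polynomial matrix in variables x = (x_1,x_2) given by P(x) = [[x_2⁴ + x_1²x_2², x_1²x_2², 0],[x_1²x_2², 2x_1⁴, x_1²x_2²],[0, x_1²x_2², x_2⁴ + x_1²x_2²]]. Then P(x) is positive semidefinite at every x ∈ ℝ², and there exist 2×2 SOS matrices S_1(x) and S_2(x) such that P(x) = E_{C_1}ᵀ S_1(x) E_{C_1} + E_{C_2}ᵀ S_2(x) E_{C_2} identically, where C_1 = {1,2} and C_2 = {2,3}. -/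
open MvPolynomial Matrix

noncomputable section

/-- Remark after Theorem 3. The matrix
`P = [[x₂⁴+x₁²x₂², x₁²x₂², 0],[x₁²x₂², 2x₁⁴, x₁²x₂²],[0, x₁²x₂², x₂⁴+x₁²x₂²]]` is
positive semidefinite at every point of `ℝ²` and admits a chordal decomposition
`P = E₁ᵀ S₁ E₁ + E₂ᵀ S₂ E₂` with `S₁, S₂` 2×2 SOS matrices. -/
theorem stmt16 :
    (∀ x : Fin 2 → ℝ,
      (evalMat (!![X 1 ^ 4 + X 0 ^ 2 * X 1 ^ 2, X 0 ^ 2 * X 1 ^ 2,    0;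
                   X 0 ^ 2 * X 1 ^ 2,           2 * X 0 ^ 4,          X 0 ^ 2 * X 1 ^ 2;
                   0,                           X 0 ^ 2 * X 1 ^ 2,    X 1 ^ 4 + X 0 ^ 2 * X 1 ^ 2] :
          Matrix (Fin 3) (Fin 3) (MvPolynomial (Fin 2) ℝ)) x).PosSemidef) ∧
    ∃ S₁ S₂ : Matrix (Fin 2) (Fin 2) (MvPolynomial (Fin 2) ℝ),
      IsSOSMat S₁ ∧ IsSOSMat S₂ ∧
      (!![X 1 ^ 4 + X 0 ^ 2 * X 1 ^ 2, X 0 ^ 2 * X 1 ^ 2,    0;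
          X 0 ^ 2 * X 1 ^ 2,           2 * X 0 ^ 4,          X 0 ^ 2 * X 1 ^ 2;
          0,                           X 0 ^ 2 * X 1 ^ 2,    X 1 ^ 4 + X 0 ^ 2 * X 1 ^ 2] :
         Matrix (Fin 3) (Fin 3) (MvPolynomial (Fin 2) ℝ))
        = (!![1, 0, 0; 0, 1, 0] : Matrix (Fin 2) (Fin 3) (MvPolynomial (Fin 2) ℝ))ᵀ * S₁
            * (!![1, 0, 0; 0, 1, 0] : Matrix (Fin 2) (Fin 3) (MvPolynomial (Fin 2) ℝ))
          + (!![0, 1, 0; 0, 0, 1] : Matrix (Fin 2) (Fin 3) (MvPolynomial (Fin 2) ℝ))ᵀ * S₂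
            * (!![0, 1, 0; 0, 0, 1] : Matrix (Fin 2) (Fin 3) (MvPolynomial (Fin 2) ℝ)) := by
  constructor
  · intro x
    set a := x 0
    set b := x 1
    have h : evalMat (!![X 1 ^ 4 + X 0 ^ 2 * X 1 ^ 2, X 0 ^ 2 * X 1 ^ 2,    0;
                   X 0 ^ 2 * X 1 ^ 2,           2 * X 0 ^ 4,          X 0 ^ 2 * X 1 ^ 2;
                   0,                           X 0 ^ 2 * X 1 ^ 2,    X 1 ^ 4 + X 0 ^ 2 * X 1 ^ 2] :
          Matrix (Fin 3) (Fin 3) (MvPolynomial (Fin 2) ℝ)) x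
        = (!![b^2, a^2, 0; a*b, 0, 0; 0, a^2, b^2; 0, 0, a*b] :
            Matrix (Fin 4) (Fin 3) ℝ)ᴴ * !![b^2, a^2, 0; a*b, 0, 0; 0, a^2, b^2; 0, 0, a*b] := by
      ext i j
      fin_cases i <;> fin_cases j <;>
        simp [evalMat, Matrix.mul_apply, Fin.sum_univ_succ, Matrix.conjTranspose] <;> ring
    rw [h]
    exact Matrix.posSemidef_conjTranspose_mul_self _
  · refine ⟨!![X 1 ^ 4 + X 0 ^ 2 * X 1 ^ 2, X 0 ^ 2 * X 1 ^ 2; X 0 ^ 2 * X 1 ^ 2, X 0 ^ 4],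
           !![X 0 ^ 4, X 0 ^ 2 * X 1 ^ 2; X 0 ^ 2 * X 1 ^ 2, X 1 ^ 4 + X 0 ^ 2 * X 1 ^ 2],
           ⟨2, !![X 1 ^ 2, X 0 ^ 2; X 0 * X 1, 0], ?_⟩,
           ⟨2, !![X 0 ^ 2, X 1 ^ 2; 0, X 0 * X 1], ?_⟩, ?_⟩ <;>
      · apply Matrix.ext; intro i j
        fin_cases i <;> fin_cases j <;>
          simp [Matrix.mul_apply, Fin.sum_univ_succ] <;> ring

end
end

section
/- Let P(x) be the 3×3 polynomial matrix in variables x = (x_1,x_2) given by P(x) = [[x_1⁴ + x_1²x_2² + x_2⁴, x_1²x_2², 0],[x_1²x_2², x_1⁴ + x_2⁴, x_1²x_2²],[0, x_1²x_2², x_1⁴ + x_1²x_2² + x_2⁴]]. Then P(x) is positive definite at every x ∈ ℝ² \ {0}, and there exist 2×2 SOS matrices S_1(x) and S_2(x) such that P(x) = E_{C_1}ᵀ S_1(x) E_{C_1} + E_{C_2}ᵀ S_2(x) E_{C_2} identically, where C_1 = {1,2} and C_2 = {2,3}. -/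
open MvPolynomial Matrix

noncomputable section

lemma key_pos (p q : ℝ) (hpq : p ≠ 0 ∨ q ≠ 0) (v : Fin 3 → ℝ) (hv : v ≠ 0) :
    0 < (q^2*v 0 + p^2*v 1)^2 + p^4*(v 0)^2 + p^2*q^2*(v 0)^2
      + (q^2*v 1 + p^2*v 2)^2 + q^4*(v 2)^2 + p^2*q^2*(v 2)^2 := by
  rcases lt_or_eq_of_le (by positivity :
    (0:ℝ) ≤ (q^2*v 0 + p^2*v 1)^2 + p^4*(v 0)^2 + p^2*q^2*(v 0)^2
      + (q^2*v 1 + p^2*v 2)^2 + q^4*(v 2)^2 + p^2*q^2*(v 2)^2) with h | h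
  · exact h
  exfalso
  have h1 : (q^2*v 0 + p^2*v 1)^2 = 0 := by nlinarith [sq_nonneg (q^2*v 0 + p^2*v 1), sq_nonneg (q^2*v 1 + p^2*v 2), sq_nonneg (p^2*v 0), sq_nonneg (p*q*v 0), sq_nonneg (q^2*v 2), sq_nonneg (p*q*v 2)]
  have h2 : p^4*(v 0)^2 = 0 := by nlinarith [sq_nonneg (q^2*v 0 + p^2*v 1), sq_nonneg (q^2*v 1 + p^2*v 2), sq_nonneg (p^2*v 0), sq_nonneg (p*q*v 0), sq_nonneg (q^2*v 2), sq_nonneg (p*q*v 2)]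
  have h3 : (q^2*v 1 + p^2*v 2)^2 = 0 := by nlinarith [sq_nonneg (q^2*v 0 + p^2*v 1), sq_nonneg (q^2*v 1 + p^2*v 2), sq_nonneg (p^2*v 0), sq_nonneg (p*q*v 0), sq_nonneg (q^2*v 2), sq_nonneg (p*q*v 2)]
  have h4 : q^4*(v 2)^2 = 0 := by nlinarith [sq_nonneg (q^2*v 0 + p^2*v 1), sq_nonneg (q^2*v 1 + p^2*v 2), sq_nonneg (p^2*v 0), sq_nonneg (p*q*v 0), sq_nonneg (q^2*v 2), sq_nonneg (p*q*v 2)]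
  have h5 : p^2*q^2*(v 0)^2 = 0 := by nlinarith [sq_nonneg (q^2*v 0 + p^2*v 1), sq_nonneg (q^2*v 1 + p^2*v 2), sq_nonneg (p^2*v 0), sq_nonneg (p*q*v 0), sq_nonneg (q^2*v 2), sq_nonneg (p*q*v 2)]
  have h6 : p^2*q^2*(v 2)^2 = 0 := by nlinarith [sq_nonneg (q^2*v 0 + p^2*v 1), sq_nonneg (q^2*v 1 + p^2*v 2), sq_nonneg (p^2*v 0), sq_nonneg (p*q*v 0), sq_nonneg (q^2*v 2), sq_nonneg (p*q*v 2)]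
  have hvne : v 0 ≠ 0 ∨ v 1 ≠ 0 ∨ v 2 ≠ 0 := by
    by_contra hc
    push_neg at hc
    apply hv
    funext i
    fin_cases i <;> simp [hc.1, hc.2.1, hc.2.2]
  rcases hpq with hp | hq
  · have hv0 : v 0 = 0 := by
      have := mul_eq_zero.mp h2
      rcases this with h | h
      · exact absurd h (by positivity)
      · exact pow_eq_zero_iff (n := 2) (by norm_num) |>.mp h
    rcases eq_or_ne q 0 with hq0 | hq0
    · have hv1 : v 1 = 0 := by
        have := sq_eq_zero_iff.mp h1
        rw [hv0, hq0] at this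
        simpa [pow_eq_zero_iff, hp] using this
      have hv2 : v 2 = 0 := by
        have := sq_eq_zero_iff.mp h3
        rw [hv1, hq0] at this
        simpa [pow_eq_zero_iff, hp] using this
      rcases hvne with h | h | h <;> [exact h hv0; exact h hv1; exact h hv2]
    · have hv2 : v 2 = 0 := by
        rcases mul_eq_zero.mp h4 with h | h
        · exact absurd h (by positivity)
        · exact pow_eq_zero_iff (n := 2) (by norm_num) |>.mp h
      have hv1 : v 1 = 0 := by
        have := sq_eq_zero_iff.mp h3
        rw [hv2] at this
        simp at this
        rcases this with h | h
        · exact absurd h hq0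
        · exact h
      rcases hvne with h | h | h <;> [exact h hv0; exact h hv1; exact h hv2]
  · have hv0 : v 0 = 0 := by
      rcases mul_eq_zero.mp h5 with h | h
      · rcases mul_eq_zero.mp h with h | h
        · have hp0 : p = 0 := pow_eq_zero_iff (n := 2) (by norm_num) |>.mp h
          have := sq_eq_zero_iff.mp h1
          rw [hp0] at this
          simp at this
          rcases this with h' | h'
          · exact absurd h' hq
          · exact h'
        · exact absurd h (pow_ne_zero 2 hq)
      · exact pow_eq_zero_iff (n := 2) (by norm_num) |>.mp h
    have hv2 : v 2 = 0 := by
      rcases mul_eq_zero.mp h4 with h | h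
      · exact absurd h (pow_ne_zero 4 hq)
      · exact pow_eq_zero_iff (n := 2) (by norm_num) |>.mp h
    have hv1 : v 1 = 0 := by
      have := sq_eq_zero_iff.mp h3
      rw [hv2] at this
      simp at this
      rcases this with h | h
      · exact absurd h hq
      · exact h
    rcases hvne with h | h | h <;> [exact h hv0; exact h hv1; exact h hv2]

/-- Example 3 of the paper. The matrix
`P = [[x₁⁴+x₁²x₂²+x₂⁴, x₁²x₂², 0],[x₁²x₂², x₁⁴+x₂⁴, x₁²x₂²],[0, x₁²x₂², x₁⁴+x₁²x₂²+x₂⁴]]`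
is positive definite at every `x ∈ ℝ² \ {0}` and admits a chordal decomposition
`P = E₁ᵀ S₁ E₁ + E₂ᵀ S₂ E₂` with `S₁, S₂` 2×2 SOS matrices. -/
theorem stmt17 :
    (∀ x : Fin 2 → ℝ, x ≠ 0 →
      (evalMat (!![X 0 ^ 4 + X 0 ^ 2 * X 1 ^ 2 + X 1 ^ 4, X 0 ^ 2 * X 1 ^ 2, 0;
                   X 0 ^ 2 * X 1 ^ 2, X 0 ^ 4 + X 1 ^ 4, X 0 ^ 2 * X 1 ^ 2;
                   0, X 0 ^ 2 * X 1 ^ 2, X 0 ^ 4 + X 0 ^ 2 * X 1 ^ 2 + X 1 ^ 4] :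
          Matrix (Fin 3) (Fin 3) (MvPolynomial (Fin 2) ℝ)) x).PosDef) ∧
    ∃ S₁ S₂ : Matrix (Fin 2) (Fin 2) (MvPolynomial (Fin 2) ℝ),
      IsSOSMat S₁ ∧ IsSOSMat S₂ ∧
      (!![X 0 ^ 4 + X 0 ^ 2 * X 1 ^ 2 + X 1 ^ 4, X 0 ^ 2 * X 1 ^ 2, 0;
          X 0 ^ 2 * X 1 ^ 2, X 0 ^ 4 + X 1 ^ 4, X 0 ^ 2 * X 1 ^ 2;
          0, X 0 ^ 2 * X 1 ^ 2, X 0 ^ 4 + X 0 ^ 2 * X 1 ^ 2 + X 1 ^ 4] :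
         Matrix (Fin 3) (Fin 3) (MvPolynomial (Fin 2) ℝ))
        = (!![1, 0, 0; 0, 1, 0] : Matrix (Fin 2) (Fin 3) (MvPolynomial (Fin 2) ℝ))ᵀ * S₁
            * (!![1, 0, 0; 0, 1, 0] : Matrix (Fin 2) (Fin 3) (MvPolynomial (Fin 2) ℝ))
          + (!![0, 1, 0; 0, 0, 1] : Matrix (Fin 2) (Fin 3) (MvPolynomial (Fin 2) ℝ))ᵀ * S₂
            * (!![0, 1, 0; 0, 0, 1] : Matrix (Fin 2) (Fin 3) (MvPolynomial (Fin 2) ℝ)) := by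
  constructor
  · intro x hx
    set p := x 0
    set q := x 1
    have hmat : (evalMat (!![X 0 ^ 4 + X 0 ^ 2 * X 1 ^ 2 + X 1 ^ 4, X 0 ^ 2 * X 1 ^ 2, 0;
                   X 0 ^ 2 * X 1 ^ 2, X 0 ^ 4 + X 1 ^ 4, X 0 ^ 2 * X 1 ^ 2;
                   0, X 0 ^ 2 * X 1 ^ 2, X 0 ^ 4 + X 0 ^ 2 * X 1 ^ 2 + X 1 ^ 4] :
          Matrix (Fin 3) (Fin 3) (MvPolynomial (Fin 2) ℝ)) x)
        = !![p^4 + p^2*q^2 + q^4, p^2*q^2, 0;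
             p^2*q^2, p^4 + q^4, p^2*q^2;
             0, p^2*q^2, p^4 + p^2*q^2 + q^4] := by
      ext i j
      fin_cases i <;> fin_cases j <;> simp [evalMat, Matrix.map_apply] <;> rfl
    rw [hmat]
    refine ⟨?_, ?_⟩
    · show _ᴴ = _
      ext i j
      fin_cases i <;> fin_cases j <;> simp [Matrix.conjTranspose_apply] <;> ring
    · intro v hv
      have hpq : p ≠ 0 ∨ q ≠ 0 := by
        by_contra hc
        push_neg at hc
        apply hx
        funext i
        fin_cases i <;> [exact hc.1; exact hc.2]
      have key := key_pos p q hpq v (by simpa using hv)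
      have expand : star v ⬝ᵥ (!![p^4 + p^2*q^2 + q^4, p^2*q^2, 0;
             p^2*q^2, p^4 + q^4, p^2*q^2;
             0, p^2*q^2, p^4 + p^2*q^2 + q^4] : Matrix (Fin 3) (Fin 3) ℝ) *ᵥ v
          = (q^2*v 0 + p^2*v 1)^2 + p^4*(v 0)^2 + p^2*q^2*(v 0)^2
            + (q^2*v 1 + p^2*v 2)^2 + q^4*(v 2)^2 + p^2*q^2*(v 2)^2 := by
        simp [dotProduct, Matrix.mulVec, Fin.sum_univ_succ]
        ring
      rw [← expand] at key
      have gen : ∀ (M : Matrix (Fin 3) (Fin 3) ℝ) (w : Fin 3 →₀ ℝ),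
          (w.sum fun i xi => w.sum fun j xj => star xi * M i j * xj) = star ⇑w ⬝ᵥ M *ᵥ ⇑w := by
        intro M w
        simp [dotProduct, Matrix.mulVec, Finsupp.sum_fintype, Finset.mul_sum, mul_assoc]
      exact lt_of_lt_of_eq key (gen _ _).symm
  · refine ⟨!![X 0 ^ 4 + X 0 ^ 2 * X 1 ^ 2 + X 1 ^ 4, X 0 ^ 2 * X 1 ^ 2;
               X 0 ^ 2 * X 1 ^ 2, X 0 ^ 4],
            !![X 1 ^ 4, X 0 ^ 2 * X 1 ^ 2;
               X 0 ^ 2 * X 1 ^ 2, X 0 ^ 4 + X 0 ^ 2 * X 1 ^ 2 + X 1 ^ 4], ?_, ?_, ?_⟩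
    · exact ⟨3, !![X 1 ^ 2, X 0 ^ 2; X 0 ^ 2, 0; X 0 * X 1, 0], by
        ext i j
        fin_cases i <;> fin_cases j <;>
          simp [Matrix.mul_apply, Fin.sum_univ_succ, Matrix.transpose_apply] <;> ring⟩
    · exact ⟨3, !![X 1 ^ 2, X 0 ^ 2; 0, X 1 ^ 2; 0, X 0 * X 1], by
        ext i j
        fin_cases i <;> fin_cases j <;>
          simp [Matrix.mul_apply, Fin.sum_univ_succ, Matrix.transpose_apply] <;> ring⟩
    · ext i j
      fin_cases i <;> fin_cases j <;>
        simp [Matrix.mul_apply, Fin.sum_univ_succ, Matrix.transpose_apply,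
          Matrix.add_apply] <;> ring
end
end
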